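/- arXiv:2012.14759 — 5 statements merged into one kernel-verified Lean document; each statement's English description precedes it below -/
import Mathlib

section
/- Let X and Y be real-valued random variables on a probability space whose joint distribution function is H(x,y) = P(X ≤ x, Y ≤ y) and whose marginal distribution functions F(x) = P(X ≤ x) and G(y) = P(Y ≤ y) are both continuous. Then there exists a unique copula C such that H(x,y) = C(F(x), G(y)) for all real x and y. -/
/-!
Put `U = F ∘ X` and `V = G ∘ Y`. Since `F` is continuous, `U` is uniform on `[0,1]`: for `u < 1`
the sublevel set `{F ≤ u}` is closed and bounded above, so it lies in `Iic x` with `F x ≤ u`, and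
conversely it contains `Iic x` for any `x` with `F x = u`. Hence the joint distribution function of
`(U, V)` is a copula `C`. The events `{X ≤ x} ⊆ {F X ≤ F x}` both have probability `F x`, so they
agree almost surely, which gives `H(x,y) = C(F x, G y)`. Uniqueness: `F` and `G` take every value
in `(0,1)`, and a copula is prescribed on the boundary of the unit square.
-/

open MeasureTheory Set

/-- A (bivariate) copula: a function `C` on `[0,1]²` (represented as a function on `ℝ²`
whose values on the unit square are the relevant ones) taking values in `[0,1]`, with
`C(u,0) = C(0,v) = 0`, `C(u,1) = u`, `C(1,v) = v`, and which is 2-increasing. -/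
def IsCopula (C : ℝ → ℝ → ℝ) : Prop :=
  (∀ u ∈ Icc (0:ℝ) 1, ∀ v ∈ Icc (0:ℝ) 1, C u v ∈ Icc (0:ℝ) 1) ∧
  (∀ u ∈ Icc (0:ℝ) 1, C u 0 = 0 ∧ C u 1 = u) ∧
  (∀ v ∈ Icc (0:ℝ) 1, C 0 v = 0 ∧ C 1 v = v) ∧
  (∀ u₁ ∈ Icc (0:ℝ) 1, ∀ u₂ ∈ Icc (0:ℝ) 1, ∀ v₁ ∈ Icc (0:ℝ) 1, ∀ v₂ ∈ Icc (0:ℝ) 1,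
    u₁ ≤ u₂ → v₁ ≤ v₂ → 0 ≤ C u₂ v₂ - C u₂ v₁ - C u₁ v₂ + C u₁ v₁)

open ProbabilityTheory Filter

lemma IsCopula.eq_of_eq_on_Ioo {C C' : ℝ → ℝ → ℝ} (hC : IsCopula C) (hC' : IsCopula C')
    (h : ∀ u ∈ Ioo (0:ℝ) 1, ∀ v ∈ Ioo (0:ℝ) 1, C u v = C' u v) :
    ∀ u ∈ Icc (0:ℝ) 1, ∀ v ∈ Icc (0:ℝ) 1, C u v = C' u v := by
  obtain ⟨-, hu, hv, -⟩ := hC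
  obtain ⟨-, hu', hv', -⟩ := hC'
  intro u hu₀ v hv₀
  rcases eq_endpoints_or_mem_Ioo_of_mem_Icc hu₀ with rfl | rfl | hu₁
  · rw [(hv v hv₀).1, (hv' v hv₀).1]
  · rw [(hv v hv₀).2, (hv' v hv₀).2]
  rcases eq_endpoints_or_mem_Ioo_of_mem_Icc hv₀ with rfl | rfl | hv₁
  · rw [(hu u hu₀).1, (hu' u hu₀).1]
  · rw [(hu u hu₀).2, (hu' u hu₀).2]
  exact h u hu₁ v hv₁

namespace ProbabilityTheory

section ContinuousCDF

variable {ν : Measure ℝ}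

lemma Ioo_subset_range_cdf (hc : Continuous (cdf ν)) : Ioo 0 1 ⊆ range (cdf ν) := by
  intro u hu
  obtain ⟨a, ha⟩ := ((tendsto_cdf_atBot ν).eventually (gt_mem_nhds hu.1)).exists
  obtain ⟨b, hb⟩ := ((tendsto_cdf_atTop ν).eventually (lt_mem_nhds hu.2)).exists
  exact mem_range_of_exists_le_of_exists_ge hc ⟨a, ha.le⟩ ⟨b, hb.le⟩

variable [IsProbabilityMeasure ν]

lemma measure_cdf_le_le_ofReal (hc : Continuous (cdf ν)) {u : ℝ} (hu : u < 1) :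
    ν {x | cdf ν x ≤ u} ≤ ENNReal.ofReal u := by
  set T := {x | cdf ν x ≤ u}
  rcases T.eq_empty_or_nonempty with hT | hT
  · simp [hT]
  obtain ⟨b, hb⟩ := ((tendsto_cdf_atTop ν).eventually (lt_mem_nhds hu)).exists
  have hbdd : BddAbove T :=
    ⟨b, fun x hx => le_of_not_gt fun hbx => (hx.trans_lt hb).not_ge (monotone_cdf ν hbx.le)⟩
  have hsup : sSup T ∈ T := (isClosed_le hc continuous_const).csSup_mem hT hbdd
  calc ν T ≤ ν (Iic (sSup T)) := measure_mono fun x hx => le_csSup hbdd hx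
    _ = ENNReal.ofReal (cdf ν (sSup T)) := (ofReal_cdf ν _).symm
    _ ≤ ENNReal.ofReal u := ENNReal.ofReal_le_ofReal hsup

lemma measure_cdf_le (hc : Continuous (cdf ν)) {u : ℝ} (hu : u ∈ Icc (0:ℝ) 1) :
    ν {x | cdf ν x ≤ u} = ENNReal.ofReal u := by
  rcases hu.2.lt_or_eq with hu₁ | rfl
  · refine le_antisymm (measure_cdf_le_le_ofReal hc hu₁) ?_
    rcases hu.1.lt_or_eq with hu₀ | rfl
    · obtain ⟨x, rfl⟩ := Ioo_subset_range_cdf hc ⟨hu₀, hu₁⟩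
      rw [ofReal_cdf]
      exact measure_mono fun y hy => monotone_cdf ν hy
    · simp
  · simp [cdf_le_one]

lemma Iic_ae_eq_cdf_le (hc : Continuous (cdf ν)) (x : ℝ) :
    Iic x =ᵐ[ν] {y | cdf ν y ≤ cdf ν x} := by
  refine ae_eq_of_subset_of_measure_ge (fun y hy => monotone_cdf ν hy) ?_
    measurableSet_Iic.nullMeasurableSet (measure_ne_top _ _)
  rw [measure_cdf_le hc ⟨cdf_nonneg ν x, cdf_le_one ν x⟩, ofReal_cdf]

end ContinuousCDF

variable {Ω : Type*} [MeasurableSpace Ω] {μ : Measure Ω}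

def jointCDF (μ : Measure Ω) (U V : Ω → ℝ) (u v : ℝ) : ℝ :=
  μ.real {ω | U ω ≤ u ∧ V ω ≤ v}

lemma jointCDF_rectangle_nonneg [IsFiniteMeasure μ] {U V : Ω → ℝ} (hU : Measurable U)
    (hV : Measurable V) {u₁ u₂ v₁ v₂ : ℝ} (hu : u₁ ≤ u₂) (hv : v₁ ≤ v₂) :
    0 ≤ jointCDF μ U V u₂ v₂ - jointCDF μ U V u₂ v₁ - jointCDF μ U V u₁ v₂ +
      jointCDF μ U V u₁ v₁ := by
  set s := {ω | U ω ≤ u₂ ∧ V ω ≤ v₁}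
  set t := {ω | U ω ≤ u₁ ∧ V ω ≤ v₂}
  have ht : MeasurableSet t := (hU measurableSet_Iic).inter (hV measurableSet_Iic)
  have hunion : s ∪ t ⊆ {ω | U ω ≤ u₂ ∧ V ω ≤ v₂} := by
    rintro ω (⟨h₁, h₂⟩ | ⟨h₁, h₂⟩)
    exacts [⟨h₁, h₂.trans hv⟩, ⟨h₁.trans hu, h₂⟩]
  have hinter : s ∩ t = {ω | U ω ≤ u₁ ∧ V ω ≤ v₁} := by
    ext ω
    simp only [s, t, mem_inter_iff, mem_ofPred_eq]
    constructor
    · rintro ⟨⟨-, h₂⟩, h₃, -⟩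
      exact ⟨h₃, h₂⟩
    · rintro ⟨h₁, h₂⟩
      exact ⟨⟨h₁.trans hu, h₂⟩, h₁, h₂.trans hv⟩
  have hsum := measureReal_union_add_inter (μ := μ) (s := s) ht
  rw [hinter] at hsum
  have hle := measureReal_mono (μ := μ) hunion
  unfold jointCDF
  linarith

lemma isCopula_jointCDF [IsProbabilityMeasure μ] {U V : Ω → ℝ} (hU : Measurable U)
    (hV : Measurable V) (hUunif : ∀ u ∈ Icc (0:ℝ) 1, μ {ω | U ω ≤ u} = ENNReal.ofReal u)
    (hVunif : ∀ v ∈ Icc (0:ℝ) 1, μ {ω | V ω ≤ v} = ENNReal.ofReal v) :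
    IsCopula (jointCDF μ U V) := by
  have hU₁ : {ω | U ω ≤ 1} =ᵐ[μ] univ :=
    ae_eq_univ.2 <| (prob_compl_eq_zero_iff (hU measurableSet_Iic)).2 <|
      (hUunif 1 ⟨zero_le_one, le_rfl⟩).trans ENNReal.ofReal_one
  have hV₁ : {ω | V ω ≤ 1} =ᵐ[μ] univ :=
    ae_eq_univ.2 <| (prob_compl_eq_zero_iff (hV measurableSet_Iic)).2 <|
      (hVunif 1 ⟨zero_le_one, le_rfl⟩).trans ENNReal.ofReal_one
  have hU₀ : μ {ω | U ω ≤ 0} = 0 := by simp [hUunif 0 (by simp)]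
  have hV₀ : μ {ω | V ω ≤ 0} = 0 := by simp [hVunif 0 (by simp)]
  refine ⟨fun u _ v _ => ⟨measureReal_nonneg, measureReal_le_one⟩, fun u hu => ⟨?_, ?_⟩,
    fun v hv => ⟨?_, ?_⟩, fun u₁ _ u₂ _ v₁ _ v₂ _ => jointCDF_rectangle_nonneg hU hV⟩
  · exact (measureReal_eq_zero_iff).2 (measure_mono_null (fun ω hω => hω.2) hV₀)
  · calc jointCDF μ U V u 1 = μ.real ({ω | U ω ≤ u} ∩ univ) :=
          measureReal_congr ((ae_eq_refl _).inter hV₁)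
      _ = u := by rw [inter_univ, measureReal_def, hUunif u hu, ENNReal.toReal_ofReal hu.1]
  · exact (measureReal_eq_zero_iff).2 (measure_mono_null (fun ω hω => hω.1) hU₀)
  · calc jointCDF μ U V 1 v = μ.real (univ ∩ {ω | V ω ≤ v}) :=
          measureReal_congr (hU₁.inter (ae_eq_refl _))
      _ = v := by rw [univ_inter, measureReal_def, hVunif v hv, ENNReal.toReal_ofReal hv.1]

section RandomVariable

variable [IsProbabilityMeasure μ] {X : Ω → ℝ}

lemma cdf_map_apply (hX : Measurable X) (x : ℝ) : cdf (μ.map X) x = μ.real {ω | X ω ≤ x} := by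
  have : IsProbabilityMeasure (μ.map X) := Measure.isProbabilityMeasure_map hX.aemeasurable
  rw [cdf_eq_real, map_measureReal_apply hX measurableSet_Iic]
  rfl

lemma measure_cdf_map_comp_le (hX : Measurable X) (hc : Continuous (cdf (μ.map X))) {u : ℝ}
    (hu : u ∈ Icc (0:ℝ) 1) : μ {ω | cdf (μ.map X) (X ω) ≤ u} = ENNReal.ofReal u := by
  have : IsProbabilityMeasure (μ.map X) := Measure.isProbabilityMeasure_map hX.aemeasurable
  rw [← measure_cdf_le hc hu, Measure.map_apply hX (measurableSet_le hc.measurable measurable_const)]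
  rfl

lemma le_ae_eq_cdf_map_comp_le (hX : Measurable X) (hc : Continuous (cdf (μ.map X))) (x : ℝ) :
    {ω | X ω ≤ x} =ᵐ[μ] {ω | cdf (μ.map X) (X ω) ≤ cdf (μ.map X) x} := by
  have : IsProbabilityMeasure (μ.map X) := Measure.isProbabilityMeasure_map hX.aemeasurable
  exact ae_eq_comp hX.aemeasurable (Iic_ae_eq_cdf_le hc x)

end RandomVariable

end ProbabilityTheory

/-- **Sklar's theorem** (existence and uniqueness for continuous margins):
if `X, Y` are real random variables with joint distribution function `H` and
continuous marginal distribution functions `F, G`, then there is a copula `C`,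
unique on `[0,1]²`, such that `H(x,y) = C(F(x), G(y))` for all `x, y`. -/
theorem sklar_existence_uniqueness
    {Ω : Type*} [MeasurableSpace Ω] (μ : Measure Ω) [IsProbabilityMeasure μ]
    (X Y : Ω → ℝ) (hX : Measurable X) (hY : Measurable Y)
    (F G : ℝ → ℝ) (H : ℝ → ℝ → ℝ)
    (hF : ∀ x, F x = (μ {ω | X ω ≤ x}).toReal)
    (hG : ∀ y, G y = (μ {ω | Y ω ≤ y}).toReal)
    (hH : ∀ x y, H x y = (μ {ω | X ω ≤ x ∧ Y ω ≤ y}).toReal)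
    (hFcont : Continuous F) (hGcont : Continuous G) :
    ∃ C : ℝ → ℝ → ℝ, IsCopula C ∧ (∀ x y, H x y = C (F x) (G y)) ∧
      ∀ C' : ℝ → ℝ → ℝ, IsCopula C' → (∀ x y, H x y = C' (F x) (G y)) →
        ∀ u ∈ Icc (0:ℝ) 1, ∀ v ∈ Icc (0:ℝ) 1, C' u v = C u v := by
  obtain rfl : F = cdf (μ.map X) := funext fun x => by rw [hF, cdf_map_apply hX]; rfl
  obtain rfl : G = cdf (μ.map Y) := funext fun y => by rw [hG, cdf_map_apply hY]; rfl
  set C := jointCDF μ (cdf (μ.map X) ∘ X) (cdf (μ.map Y) ∘ Y)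
  have hC : IsCopula C :=
    isCopula_jointCDF (hFcont.measurable.comp hX) (hGcont.measurable.comp hY)
      (fun _ => measure_cdf_map_comp_le hX hFcont) (fun _ => measure_cdf_map_comp_le hY hGcont)
  have hHC : ∀ x y, H x y = C (cdf (μ.map X) x) (cdf (μ.map Y) y) := fun x y =>
    (hH x y).trans <| measureReal_congr <|
      (le_ae_eq_cdf_map_comp_le hX hFcont x).inter (le_ae_eq_cdf_map_comp_le hY hGcont y)
  refine ⟨C, hC, hHC, fun C' hC' hHC' => hC'.eq_of_eq_on_Ioo hC ?_⟩
  rintro _ hu _ hv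
  obtain ⟨x, rfl⟩ := Ioo_subset_range_cdf hFcont hu
  obtain ⟨y, rfl⟩ := Ioo_subset_range_cdf hGcont hv
  rw [← hHC', hHC]
end

section
/- Let C be a copula and let F and G be univariate distribution functions (each nondecreasing, right-continuous, with limit 0 at −∞ and limit 1 at +∞). Then there exists a probability measure μ on ℝ² such that μ((−∞,x] × (−∞,y]) = C(F(x), G(y)) for all real x, y; moreover the two marginal measures of μ have distribution functions F and G respectively. -/
open MeasureTheory Set Filter

/-- A univariate distribution function: nondecreasing, right-continuous, with values in
`[0,1]`, tending to `0` at `-∞` and to `1` at `+∞`. -/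
def IsDistFun (F : ℝ → ℝ) : Prop :=
  Monotone F ∧ (∀ x, ContinuousWithinAt F (Ici x) x) ∧
  (∀ x, F x ∈ Icc (0:ℝ) 1) ∧
  Tendsto F atBot (nhds 0) ∧ Tendsto F atTop (nhds 1)

/-!
For rational `q`, `x ↦ C (F x) (G q)` is the distribution function of a measure `M q` on `ℝ`.
Since a copula is 1-Lipschitz in each variable, `M q` is dominated by the measure `ν` of `F`, and
since it is 2-increasing, `M q` increases with `q`. Hence the Radon–Nikodym derivatives
`dM q / dν (x)` are, for `ν`-a.e. `x`, the values at rational points of a distribution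
function; the resulting Markov kernel `κ` gives `μ = ν ⊗ κ` with `μ (s ×ˢ Iic q) = M q s`.
Right-continuity in the second variable extends this from rational to real `q`.
-/

open ProbabilityTheory Topology
open scoped ENNReal

lemma eq_of_forall_ratCast_eq_of_continuousWithinAt_Ioi {X : Type*} [TopologicalSpace X]
    [T2Space X] {f g : ℝ → X} {y : ℝ} (hf : ContinuousWithinAt f (Ioi y) y)
    (hg : ContinuousWithinAt g (Ioi y) y) (h : ∀ q : ℚ, f q = g q) : f y = g y := by
  obtain ⟨u, -, hyu, hu⟩ := Real.exists_seq_rat_strictAnti_tendsto y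
  have hu' : Tendsto (fun n => (u n : ℝ)) atTop (𝓝[>] y) :=
    tendsto_nhdsWithin_iff.2 ⟨hu, .of_forall hyu⟩
  refine tendsto_nhds_unique (hf.tendsto.comp hu') ?_
  simpa only [Function.comp_def, h] using hg.tendsto.comp hu'

lemma continuousWithinAt_measure_prod_Iic {α : Type*} [MeasurableSpace α]
    (μ : Measure (α × ℝ)) [IsFiniteMeasure μ] {s : Set α} (hs : MeasurableSet s) (y : ℝ) :
    ContinuousWithinAt (fun z => μ (s ×ˢ Iic z)) (Ioi y) y := by
  have hinter : ⋂ z > y, s ×ˢ Iic z = s ×ˢ Iic y := by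
    ext ⟨a, b⟩
    simp only [mem_iInter, mem_prod, mem_Iic]
    exact ⟨fun h => ⟨(h (y + 1) (by linarith)).1,
      le_of_forall_gt_imp_ge_of_dense fun z hz => (h z hz).2⟩,
      fun h z hz => ⟨h.1, h.2.trans hz.le⟩⟩
  have := tendsto_measure_biInter_gt (μ := μ) (s := fun z => s ×ˢ Iic z) (a := y)
    (fun z _ => (hs.prod measurableSet_Iic).nullMeasurableSet)
    (fun i j _ hij => prod_mono subset_rfl (Iic_subset_Iic.2 hij))
    ⟨y + 1, by linarith, measure_ne_top _ _⟩
  rwa [hinter] at this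

lemma measure_prod_Iic_eq_of_forall_ratCast {α : Type*} [MeasurableSpace α]
    (μ : Measure (α × ℝ)) [IsFiniteMeasure μ] {s : Set α} (hs : MeasurableSet s)
    {h : ℝ → ℝ} (hh : ∀ y, ContinuousWithinAt h (Ici y) y)
    (hq : ∀ q : ℚ, μ (s ×ˢ Iic (q : ℝ)) = ENNReal.ofReal (h q)) (y : ℝ) :
    μ (s ×ˢ Iic y) = ENNReal.ofReal (h y) :=
  eq_of_forall_ratCast_eq_of_continuousWithinAt_Ioi (continuousWithinAt_measure_prod_Iic μ hs y)
    (ENNReal.continuous_ofReal.continuousAt.comp_continuousWithinAt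
      ((hh y).mono Ioi_subset_Ici_self)) hq

lemma StieltjesFunction.measure_mono_of_sub_le {f g : StieltjesFunction ℝ}
    (h : ∀ a b, a ≤ b → f b - f a ≤ g b - g a) : f.measure ≤ g.measure := by
  let d : StieltjesFunction ℝ :=
    { toFun x := g x - f x
      mono' a b hab := by linarith [h a b hab]
      right_continuous' x := (g.right_continuous x).sub (f.right_continuous x) }
  have hg : g = f + d := StieltjesFunction.ext fun x => (add_sub_cancel (f x) (g x)).symm
  rw [hg, StieltjesFunction.measure_add]
  exact Measure.le_add_right le_rfl

namespace IsDistFun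

variable {F : ℝ → ℝ}

def stieltjesFunction (hF : IsDistFun F) : StieltjesFunction ℝ := ⟨F, hF.1, hF.2.1⟩

@[simp] lemma coe_stieltjesFunction (hF : IsDistFun F) : ⇑hF.stieltjesFunction = F := rfl

lemma isProbabilityMeasure (hF : IsDistFun F) :
    IsProbabilityMeasure hF.stieltjesFunction.measure :=
  hF.stieltjesFunction.isProbabilityMeasure hF.2.2.2.1 hF.2.2.2.2

lemma measure_Iic (hF : IsDistFun F) (x : ℝ) :
    hF.stieltjesFunction.measure (Iic x) = ENNReal.ofReal (F x) := by
  simpa using hF.stieltjesFunction.measure_Iic hF.2.2.2.1 x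

variable {X : Type*} [TopologicalSpace X] {φ : ℝ → X}

lemma continuousWithinAt_comp (hF : IsDistFun F) (hφ : ContinuousOn φ (Icc 0 1)) (x : ℝ) :
    ContinuousWithinAt (φ ∘ F) (Ici x) x :=
  (hφ _ (hF.2.2.1 x)).comp (hF.2.1 x) fun y _ => hF.2.2.1 y

lemma tendsto_comp_atBot (hF : IsDistFun F) (hφ : ContinuousOn φ (Icc 0 1)) :
    Tendsto (φ ∘ F) atBot (𝓝 (φ 0)) :=
  (hφ 0 ⟨le_rfl, zero_le_one⟩).tendsto.comp
    (tendsto_nhdsWithin_iff.2 ⟨hF.2.2.2.1, .of_forall hF.2.2.1⟩)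

lemma tendsto_comp_atTop (hF : IsDistFun F) (hφ : ContinuousOn φ (Icc 0 1)) :
    Tendsto (φ ∘ F) atTop (𝓝 (φ 1)) :=
  (hφ 1 ⟨zero_le_one, le_rfl⟩).tendsto.comp
    (tendsto_nhdsWithin_iff.2 ⟨hF.2.2.2.2, .of_forall hF.2.2.1⟩)

end IsDistFun

namespace IsCopula

variable {C : ℝ → ℝ → ℝ} {u₁ u₂ v v₁ v₂ : ℝ}

lemma swap (hC : IsCopula C) : IsCopula (Function.swap C) :=
  ⟨fun u hu v hv => hC.1 v hv u hu, hC.2.2.1, hC.2.1,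
    fun u₁ hu₁ u₂ hu₂ v₁ hv₁ v₂ hv₂ hu hv => by
      have := hC.2.2.2 v₁ hv₁ v₂ hv₂ u₁ hu₁ u₂ hu₂ hv hu
      simp only [Function.swap]
      linarith⟩

lemma mono_left (hC : IsCopula C) (hu₁ : u₁ ∈ Icc (0:ℝ) 1) (hu₂ : u₂ ∈ Icc (0:ℝ) 1)
    (hv : v ∈ Icc (0:ℝ) 1) (h : u₁ ≤ u₂) : C u₁ v ≤ C u₂ v := by
  have := hC.2.2.2 u₁ hu₁ u₂ hu₂ 0 ⟨le_rfl, zero_le_one⟩ v hv h hv.1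
  linarith [(hC.2.1 u₁ hu₁).1, (hC.2.1 u₂ hu₂).1]

lemma sub_le_left (hC : IsCopula C) (hu₁ : u₁ ∈ Icc (0:ℝ) 1)
    (hu₂ : u₂ ∈ Icc (0:ℝ) 1) (hv : v ∈ Icc (0:ℝ) 1) (h : u₁ ≤ u₂) :
    C u₂ v - C u₁ v ≤ u₂ - u₁ := by
  have := hC.2.2.2 u₁ hu₁ u₂ hu₂ v hv 1 ⟨zero_le_one, le_rfl⟩ h hv.2
  linarith [(hC.2.1 u₁ hu₁).2, (hC.2.1 u₂ hu₂).2]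

lemma lipschitzOnWith_left (hC : IsCopula C) (hv : v ∈ Icc (0:ℝ) 1) :
    LipschitzOnWith 1 (fun u => C u v) (Icc 0 1) :=
  LipschitzOnWith.of_le_add fun x hx y hy => by
    rw [Real.dist_eq]
    rcases le_total x y with h | h
    · linarith [hC.mono_left hx hy hv h, abs_nonneg (x - y)]
    · linarith [hC.sub_le_left hy hx hv h, le_abs_self (x - y)]

variable {F : ℝ → ℝ}

def stieltjesFunction (hC : IsCopula C) (hF : IsDistFun F) (hv : v ∈ Icc (0:ℝ) 1) :
    StieltjesFunction ℝ where
  toFun x := C (F x) v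
  mono' _ _ h := hC.mono_left (hF.2.2.1 _) (hF.2.2.1 _) hv (hF.1 h)
  right_continuous' := hF.continuousWithinAt_comp (hC.lipschitzOnWith_left hv).continuousOn

@[simp] lemma coe_stieltjesFunction (hC : IsCopula C) (hF : IsDistFun F)
    (hv : v ∈ Icc (0:ℝ) 1) :
    ⇑(hC.stieltjesFunction hF hv) = fun x => C (F x) v := rfl

lemma tendsto_stieltjesFunction_atBot (hC : IsCopula C) (hF : IsDistFun F)
    (hv : v ∈ Icc (0:ℝ) 1) : Tendsto (hC.stieltjesFunction hF hv) atBot (𝓝 0) := by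
  simpa [Function.comp_def, (hC.2.2.1 v hv).1] using
    hF.tendsto_comp_atBot (hC.lipschitzOnWith_left hv).continuousOn

lemma measure_stieltjesFunction_Iic (hC : IsCopula C) (hF : IsDistFun F)
    (hv : v ∈ Icc (0:ℝ) 1) (x : ℝ) :
    (hC.stieltjesFunction hF hv).measure (Iic x) = ENNReal.ofReal (C (F x) v) := by
  simpa using
    (hC.stieltjesFunction hF hv).measure_Iic (hC.tendsto_stieltjesFunction_atBot hF hv) x

lemma measure_stieltjesFunction_univ (hC : IsCopula C) (hF : IsDistFun F)
    (hv : v ∈ Icc (0:ℝ) 1) :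
    (hC.stieltjesFunction hF hv).measure univ = ENNReal.ofReal v := by
  have htop : Tendsto (hC.stieltjesFunction hF hv) atTop (𝓝 v) := by
    simpa [Function.comp_def, (hC.2.2.1 v hv).2] using
      hF.tendsto_comp_atTop (hC.lipschitzOnWith_left hv).continuousOn
  simpa using (hC.stieltjesFunction hF hv).measure_univ
    (hC.tendsto_stieltjesFunction_atBot hF hv) htop

lemma measure_stieltjesFunction_le (hC : IsCopula C) (hF : IsDistFun F)
    (hv : v ∈ Icc (0:ℝ) 1) :
    (hC.stieltjesFunction hF hv).measure ≤ hF.stieltjesFunction.measure :=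
  StieltjesFunction.measure_mono_of_sub_le fun a b h =>
    hC.sub_le_left (hF.2.2.1 a) (hF.2.2.1 b) hv (hF.1 h)

lemma measure_stieltjesFunction_mono (hC : IsCopula C) (hF : IsDistFun F)
    (hv₁ : v₁ ∈ Icc (0:ℝ) 1) (hv₂ : v₂ ∈ Icc (0:ℝ) 1) (h : v₁ ≤ v₂) :
    (hC.stieltjesFunction hF hv₁).measure ≤ (hC.stieltjesFunction hF hv₂).measure :=
  StieltjesFunction.measure_mono_of_sub_le fun a b hab => by
    have := hC.2.2.2 _ (hF.2.2.1 a) _ (hF.2.2.1 b) _ hv₁ _ hv₂ (hF.1 hab) h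
    change C (F b) v₁ - C (F a) v₁ ≤ C (F b) v₂ - C (F a) v₂
    linarith

end IsCopula

section RatIndexedFamily

variable {α : Type*} [MeasurableSpace α] {ν : Measure α} [IsFiniteMeasure ν]
  {M : ℚ → Measure α}

lemma setLIntegral_rnDeriv_of_le {μ : Measure α} (h : μ ≤ ν) (s : Set α) :
    ∫⁻ x in s, μ.rnDeriv ν x ∂ν = μ s :=
  have := isFiniteMeasure_of_le ν h
  Measure.setLIntegral_rnDeriv (Measure.absolutelyContinuous_of_le h) s

lemma lintegral_rnDeriv_of_le {μ : Measure α} (h : μ ≤ ν) :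
    ∫⁻ x, μ.rnDeriv ν x ∂ν = μ univ := by
  simpa using setLIntegral_rnDeriv_of_le h univ

lemma ae_monotone_rnDeriv (hle : ∀ q, M q ≤ ν) (hmono : Monotone M) :
    ∀ᵐ x ∂ν, Monotone fun q => (M q).rnDeriv ν x :=
  ae_all_iff.2 fun q => ae_all_iff.2 fun r => eventually_imp_distrib_left.2 fun hqr =>
    ae_le_of_forall_setLIntegral_le_of_sigmaFinite (Measure.measurable_rnDeriv _ _)
      fun s _ _ => by
        rw [setLIntegral_rnDeriv_of_le (hle q), setLIntegral_rnDeriv_of_le (hle r)]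
        exact hmono hqr s

lemma ae_rnDeriv_le_one (hle : ∀ q, M q ≤ ν) :
    ∀ᵐ x ∂ν, ∀ q, (M q).rnDeriv ν x ≤ 1 :=
  ae_all_iff.2 fun q => Measure.rnDeriv_le_one_of_le (hle q)

lemma ae_iSup_rnDeriv_eq_one (hle : ∀ q, M q ≤ ν)
    (htop : Tendsto (fun q => M q univ) atTop (𝓝 (ν univ))) :
    ∀ᵐ x ∂ν, ⨆ q, (M q).rnDeriv ν x = 1 := by
  have hle_one : (fun x => ⨆ q, (M q).rnDeriv ν x) ≤ᵐ[ν] 1 :=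
    (ae_rnDeriv_le_one hle).mono fun x hx => iSup_le hx
  have hfin : ∫⁻ x, ⨆ q, (M q).rnDeriv ν x ∂ν ≠ ∞ :=
    ((lintegral_mono_ae hle_one).trans_lt (by simp [measure_lt_top])).ne
  refine ae_eq_of_ae_le_of_lintegral_le hle_one hfin aemeasurable_const ?_
  simpa using le_of_tendsto' htop fun q => (lintegral_rnDeriv_of_le (hle q)).symm.trans_le
    (lintegral_mono fun x => le_iSup (fun q => (M q).rnDeriv ν x) q)

lemma ae_iInf_rnDeriv_eq_zero (hle : ∀ q, M q ≤ ν)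
    (hbot : Tendsto (fun q => M q univ) atBot (𝓝 0)) :
    ∀ᵐ x ∂ν, ⨅ q, (M q).rnDeriv ν x = 0 := by
  refine (lintegral_eq_zero_iff (Measurable.iInf fun q => Measure.measurable_rnDeriv _ _)).1 ?_
  refine le_antisymm (ge_of_tendsto' hbot fun q => ?_) bot_le
  exact (lintegral_mono fun x => iInf_le _ q).trans_eq (lintegral_rnDeriv_of_le (hle q))

lemma ae_iInf_Ioi_rnDeriv_eq (hle : ∀ q, M q ≤ ν) (hmono : Monotone M)
    (hrc : ∀ t, Tendsto (fun q => M q univ) (𝓝[>] t) (𝓝 (M t univ))) :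
    ∀ᵐ x ∂ν, ∀ t : ℚ, ⨅ r : Ioi t, (M r).rnDeriv ν x = (M t).rnDeriv ν x := by
  refine ae_all_iff.2 fun t => ?_
  have hle_inf : (M t).rnDeriv ν ≤ᵐ[ν] fun x => ⨅ r : Ioi t, (M r).rnDeriv ν x :=
    (ae_monotone_rnDeriv hle hmono).mono fun x hx => le_iInf fun r => hx r.2.le
  have hfin : ∫⁻ x, (M t).rnDeriv ν x ∂ν ≠ ∞ := by
    rw [lintegral_rnDeriv_of_le (hle t)]
    exact ((hle t univ).trans_lt (measure_lt_top ν univ)).ne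
  refine (ae_eq_of_ae_le_of_lintegral_le hle_inf hfin
    (Measurable.iInf fun r => Measure.measurable_rnDeriv _ _).aemeasurable ?_).symm
  rw [lintegral_rnDeriv_of_le (hle t)]
  refine ge_of_tendsto (hrc t) (eventually_nhdsWithin_of_forall fun r hr => ?_)
  exact (lintegral_mono fun x => iInf_le _ ⟨r, hr⟩).trans_eq (lintegral_rnDeriv_of_le (hle r))

lemma ae_isRatStieltjesPoint_rnDeriv (hle : ∀ q, M q ≤ ν) (hmono : Monotone M)
    (htop : Tendsto (fun q => M q univ) atTop (𝓝 (ν univ)))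
    (hbot : Tendsto (fun q => M q univ) atBot (𝓝 0))
    (hrc : ∀ t, Tendsto (fun q => M q univ) (𝓝[>] t) (𝓝 (M t univ))) :
    ∀ᵐ x ∂ν, IsRatStieltjesPoint (fun x q => ((M q).rnDeriv ν x).toReal) x := by
  filter_upwards [ae_monotone_rnDeriv hle hmono, ae_rnDeriv_le_one hle,
    ae_iSup_rnDeriv_eq_one hle htop, ae_iInf_rnDeriv_eq_zero hle hbot,
    ae_iInf_Ioi_rnDeriv_eq hle hmono hrc] with x hmono_x hle_x hsup hinf hinf_Ioi
  have hfin q : (M q).rnDeriv ν x ≠ ∞ := ((hle_x q).trans_lt ENNReal.one_lt_top).ne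
  refine ⟨fun q r hqr => ENNReal.toReal_mono (hfin r) (hmono_x hqr), ?_, ?_, fun t => ?_⟩
  · have := tendsto_atTop_iSup hmono_x
    rw [hsup] at this
    exact (ENNReal.tendsto_toReal ENNReal.one_ne_top).comp this
  · have := tendsto_atBot_iInf hmono_x
    rw [hinf] at this
    exact (ENNReal.tendsto_toReal ENNReal.zero_ne_top).comp this
  · rw [← ENNReal.toReal_iInf fun r : Ioi t => hfin r, hinf_Ioi t]

theorem exists_measure_prod_Iic_ratCast (hle : ∀ q, M q ≤ ν) (hmono : Monotone M)
    (htop : Tendsto (fun q => M q univ) atTop (𝓝 (ν univ)))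
    (hbot : Tendsto (fun q => M q univ) atBot (𝓝 0))
    (hrc : ∀ t, Tendsto (fun q => M q univ) (𝓝[>] t) (𝓝 (M t univ))) :
    ∃ μ : Measure (α × ℝ), μ.map Prod.fst = ν ∧
      ∀ s, MeasurableSet s → ∀ q : ℚ, μ (s ×ˢ Iic (q : ℝ)) = M q s := by
  set f : α → ℚ → ℝ := fun x q => ((M q).rnDeriv ν x).toReal
  have hf : Measurable f :=
    measurable_pi_lambda _ fun q => (Measure.measurable_rnDeriv _ _).ennreal_toReal
  let κ : Kernel α ℝ :=
    ⟨fun x => (stieltjesOfMeasurableRat f hf x).measure,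
      measurable_measure_stieltjesOfMeasurableRat hf⟩
  have : IsMarkovKernel κ := ⟨fun x => ⟨measure_stieltjesOfMeasurableRat_univ hf x⟩⟩
  have hκ : ∀ᵐ x ∂ν, ∀ q : ℚ, κ x (Iic (q : ℝ)) = (M q).rnDeriv ν x := by
    filter_upwards [ae_isRatStieltjesPoint_rnDeriv hle hmono htop hbot hrc,
      ae_rnDeriv_le_one hle] with x hx hle_x q
    change (stieltjesOfMeasurableRat f hf x).measure (Iic (q : ℝ)) = _
    rw [measure_stieltjesOfMeasurableRat_Iic, stieltjesOfMeasurableRat_eq,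
      toRatCDF_of_isRatStieltjesPoint hx,
      ENNReal.ofReal_toReal ((hle_x q).trans_lt ENNReal.one_lt_top).ne]
  refine ⟨ν ⊗ₘ κ, Measure.fst_compProd ν κ, fun s hs q => ?_⟩
  rw [Measure.compProd_apply_prod hs measurableSet_Iic, ← setLIntegral_rnDeriv_of_le (hle q) s]
  exact setLIntegral_congr_fun_ae hs (hκ.mono fun x hx _ => hx q)

end RatIndexedFamily

lemma IsCopula.exists_measure_prod_Iic_ratCast {C : ℝ → ℝ → ℝ} {F G : ℝ → ℝ}
    (hC : IsCopula C) (hF : IsDistFun F) (hG : IsDistFun G) :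
    ∃ μ : Measure (ℝ × ℝ), μ.map Prod.fst = hF.stieltjesFunction.measure ∧
      ∀ s, MeasurableSet s → ∀ q : ℚ,
        μ (s ×ˢ Iic (q : ℝ)) = (hC.stieltjesFunction hF (hG.2.2.1 q)).measure s := by
  have := hF.isProbabilityMeasure
  have hofReal : ContinuousOn ENNReal.ofReal (Icc 0 1) := ENNReal.continuous_ofReal.continuousOn
  refine _root_.exists_measure_prod_Iic_ratCast (fun q => hC.measure_stieltjesFunction_le hF _)
    (fun q r hqr => hC.measure_stieltjesFunction_mono hF _ _ (hG.1 (Rat.cast_le.2 hqr)))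
    ?_ ?_ fun t => ?_ <;> simp only [hC.measure_stieltjesFunction_univ]
  · simpa [Function.comp_def] using
      (hG.tendsto_comp_atTop hofReal).comp (tendsto_ratCast_atTop_iff.2 tendsto_id)
  · simpa [Function.comp_def] using
      (hG.tendsto_comp_atBot hofReal).comp (tendsto_ratCast_atBot_iff.2 tendsto_id)
  · exact ((hG.continuousWithinAt_comp hofReal t).comp
      Rat.continuous_coe_real.continuousWithinAt
      fun r (hr : t < r) => mem_Ici.2 (Rat.cast_le.2 hr.le)).tendsto

/-- **Converse part of Sklar's theorem**: given a copula `C` and univariate distribution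
functions `F, G`, there is a probability measure `μ` on `ℝ²` whose joint distribution
function is `C(F(x), G(y))` and whose marginal distribution functions are `F` and `G`. -/
theorem sklar_converse (C : ℝ → ℝ → ℝ) (hC : IsCopula C)
    (F G : ℝ → ℝ) (hF : IsDistFun F) (hG : IsDistFun G) :
    ∃ μ : Measure (ℝ × ℝ), IsProbabilityMeasure μ ∧
      (∀ x y : ℝ, (μ (Iic x ×ˢ Iic y)).toReal = C (F x) (G y)) ∧
      (∀ x : ℝ, ((μ.map Prod.fst) (Iic x)).toReal = F x) ∧
      (∀ y : ℝ, ((μ.map Prod.snd) (Iic y)).toReal = G y) := by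
  obtain ⟨μ, hfst, hμ⟩ := hC.exists_measure_prod_Iic_ratCast hF hG
  have hμprob : IsProbabilityMeasure μ := ⟨by
    rw [← preimage_univ (f := Prod.fst), ← Measure.map_apply measurable_fst .univ, hfst]
    exact hF.isProbabilityMeasure.measure_univ⟩
  refine ⟨μ, hμprob, fun x y => ?_, fun x => ?_, fun y => ?_⟩
  · rw [measure_prod_Iic_eq_of_forall_ratCast μ measurableSet_Iic (h := fun y => C (F x) (G y))
      (hG.continuousWithinAt_comp (hC.swap.lipschitzOnWith_left (hF.2.2.1 x)).continuousOn)
      (fun q => by rw [hμ _ measurableSet_Iic, hC.measure_stieltjesFunction_Iic]),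
      ENNReal.toReal_ofReal (hC.1 _ (hF.2.2.1 x) _ (hG.2.2.1 y)).1]
  · rw [hfst, hF.measure_Iic, ENNReal.toReal_ofReal (hF.2.2.1 x).1]
  · rw [Measure.map_apply measurable_snd measurableSet_Iic, ← univ_prod,
      measure_prod_Iic_eq_of_forall_ratCast μ .univ hG.2.1
        (fun q => by rw [hμ _ .univ, hC.measure_stieltjesFunction_univ]),
      ENNReal.toReal_ofReal (hG.2.2.1 y).1]
end

section
/- Let (X₁,Y₁), (X₂,Y₂), (X₃,Y₃) be three independent, identically distributed pairs of real random variables whose common joint distribution function is H with continuous marginal distribution functions F and G, and let C be the copula with H(x,y) = C(F(x), G(y)) for all x, y. Then the Spearman's rho ρ = 3{ P((X₁−X₂)(Y₁−Y₃) > 0) − P((X₁−X₂)(Y₁−Y₃) < 0) } satisfies ρ = 12 ∫₀¹ ∫₀¹ C(u,v) du dv − 3. -/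
/-!
Let `A = {X₀ ≤ X₁}` and `B = {Y₀ ≤ Y₂}`. The margins have no atoms, so ties have probability zero
and, almost surely, `(X₀ - X₁)(Y₀ - Y₂)` is positive exactly on `(A ∩ B) ∪ (Aᶜ ∩ Bᶜ)` and negative
exactly on `A △ B`; hence `ρ / 3 = 1 - 2 P(A) - 2 P(B) + 4 P(A ∩ B)`. Integrating out the
independent copy `(X₀, Y₀)` gives `P(A) = E F(X₁)`, `P(B) = E G(Y₂)` and
`P(A ∩ B) = E H(X₁, Y₂) = E C(F(X₁), G(Y₂))`. Because `F` and `G` are continuous, `F(X₁)` and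
`G(Y₂)` are uniform on `[0, 1]` (probability integral transform), and they are independent, so
`P(A) = P(B) = 1/2` and `P(A ∩ B) = ∫₀¹∫₀¹ C`.
-/

open MeasureTheory Set ProbabilityTheory

open Filter Function

section Copula

variable {C : ℝ → ℝ → ℝ}

theorem IsCopula.sub_mem_Icc_left (hC : IsCopula C) {u₁ u₂ v : ℝ} (hu₁ : u₁ ∈ Icc (0:ℝ) 1)
    (hu₂ : u₂ ∈ Icc (0:ℝ) 1) (hv : v ∈ Icc (0:ℝ) 1) (h : u₁ ≤ u₂) :
    C u₂ v - C u₁ v ∈ Icc 0 (u₂ - u₁) := by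
  obtain ⟨-, hbdry, -, hinc⟩ := hC
  have hlow := hinc u₁ hu₁ u₂ hu₂ 0 ⟨le_rfl, zero_le_one⟩ v hv h hv.1
  have hup := hinc u₁ hu₁ u₂ hu₂ v hv 1 ⟨zero_le_one, le_rfl⟩ h hv.2
  obtain ⟨h₁0, h₁1⟩ := hbdry u₁ hu₁
  obtain ⟨h₂0, h₂1⟩ := hbdry u₂ hu₂
  constructor <;> linarith

theorem IsCopula.sub_mem_Icc_right (hC : IsCopula C) {u v₁ v₂ : ℝ} (hu : u ∈ Icc (0:ℝ) 1)
    (hv₁ : v₁ ∈ Icc (0:ℝ) 1) (hv₂ : v₂ ∈ Icc (0:ℝ) 1) (h : v₁ ≤ v₂) :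
    C u v₂ - C u v₁ ∈ Icc 0 (v₂ - v₁) := by
  obtain ⟨-, -, hbdry, hinc⟩ := hC
  have hlow := hinc 0 ⟨le_rfl, zero_le_one⟩ u hu v₁ hv₁ v₂ hv₂ hu.1 h
  have hup := hinc u hu 1 ⟨zero_le_one, le_rfl⟩ v₁ hv₁ v₂ hv₂ hu.2 h
  obtain ⟨h₁0, h₁1⟩ := hbdry v₁ hv₁
  obtain ⟨h₂0, h₂1⟩ := hbdry v₂ hv₂
  constructor <;> linarith

theorem IsCopula.abs_sub_le_left (hC : IsCopula C) {u₁ u₂ v : ℝ} (hu₁ : u₁ ∈ Icc (0:ℝ) 1)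
    (hu₂ : u₂ ∈ Icc (0:ℝ) 1) (hv : v ∈ Icc (0:ℝ) 1) : |C u₂ v - C u₁ v| ≤ |u₂ - u₁| := by
  rcases le_total u₁ u₂ with h | h
  · obtain ⟨h0, h1⟩ := hC.sub_mem_Icc_left hu₁ hu₂ hv h
    rw [abs_of_nonneg h0]
    exact h1.trans (le_abs_self _)
  · obtain ⟨h0, h1⟩ := hC.sub_mem_Icc_left hu₂ hu₁ hv h
    rw [abs_sub_comm, abs_of_nonneg h0, abs_sub_comm]
    exact h1.trans (le_abs_self _)

theorem IsCopula.abs_sub_le_right (hC : IsCopula C) {u v₁ v₂ : ℝ} (hu : u ∈ Icc (0:ℝ) 1)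
    (hv₁ : v₁ ∈ Icc (0:ℝ) 1) (hv₂ : v₂ ∈ Icc (0:ℝ) 1) : |C u v₂ - C u v₁| ≤ |v₂ - v₁| := by
  rcases le_total v₁ v₂ with h | h
  · obtain ⟨h0, h1⟩ := hC.sub_mem_Icc_right hu hv₁ hv₂ h
    rw [abs_of_nonneg h0]
    exact h1.trans (le_abs_self _)
  · obtain ⟨h0, h1⟩ := hC.sub_mem_Icc_right hu hv₂ hv₁ h
    rw [abs_sub_comm, abs_of_nonneg h0, abs_sub_comm]
    exact h1.trans (le_abs_self _)

theorem IsCopula.continuousOn (hC : IsCopula C) :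
    ContinuousOn (uncurry C) (Icc 0 1 ×ˢ Icc 0 1) := by
  refine (LipschitzOnWith.of_dist_le_mul (K := 2) fun p hp q hq => ?_).continuousOn
  have h₁ : |p.1 - q.1| ≤ dist p q := by rw [← Real.dist_eq, Prod.dist_eq]; exact le_max_left _ _
  have h₂ : |p.2 - q.2| ≤ dist p q := by rw [← Real.dist_eq, Prod.dist_eq]; exact le_max_right _ _
  calc dist (C p.1 p.2) (C q.1 q.2)
      ≤ |C p.1 p.2 - C q.1 p.2| + |C q.1 p.2 - C q.1 q.2| := abs_sub_le _ _ _
    _ ≤ |p.1 - q.1| + |p.2 - q.2| :=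
        add_le_add (hC.abs_sub_le_left hq.1 hp.1 hp.2) (hC.abs_sub_le_right hq.1 hq.2 hp.2)
    _ ≤ 2 * dist p q := by linarith

end Copula

theorem Monotone.exists_preimage_Iic_eq_Iic {f : ℝ → ℝ} (hf : Monotone f) (hc : Continuous f)
    {t : ℝ} (hne : (f ⁻¹' Iic t).Nonempty) (hbdd : BddAbove (f ⁻¹' Iic t)) :
    ∃ s, f s = t ∧ f ⁻¹' Iic t = Iic s := by
  have hpre : f ⁻¹' Iic t = Iic (sSup (f ⁻¹' Iic t)) := by
    have := lowerClosure_eq_Iic_csSup hne hbdd (isClosed_Iic.preimage hc)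
    rwa [((isLowerSet_Iic t).preimage hf).lowerClosure] at this
  set s := sSup (f ⁻¹' Iic t)
  have hst : f s ≤ t := (hpre ▸ self_mem_Iic : s ∈ f ⁻¹' Iic t)
  have hts : t ≤ f s := by
    refine _root_.ge_of_tendsto ((hc.tendsto s).mono_left nhdsWithin_le_nhds)
      (eventually_nhdsWithin_of_forall (s := Ioi s) fun y hy => ?_)
    have : y ∉ f ⁻¹' Iic t := by rw [hpre]; exact not_le.2 (mem_Ioi.1 hy)
    exact (not_le.1 this).le
  exact ⟨s, le_antisymm hst hts, hpre⟩

section CDF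

variable {ν : Measure ℝ} [IsProbabilityMeasure ν]

theorem nullSingletonClass_of_continuous_cdf (hc : Continuous (cdf ν)) : NullSingletonClass ν where
  measure_singleton x := by
    rw [← measure_cdf ν, StieltjesFunction.measure_singleton,
      hc.continuousWithinAt.leftLim_eq, sub_self, ENNReal.ofReal_zero]

theorem measure_cdf_preimage_Iic (hc : Continuous (cdf ν)) {t : ℝ} (ht₀ : 0 ≤ t) (ht₁ : t < 1) :
    ν (cdf ν ⁻¹' Iic t) = ENNReal.ofReal t := by
  rcases (cdf ν ⁻¹' Iic t).eq_empty_or_nonempty with hempty | hne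
  · have ht : t = 0 := by
      refine le_antisymm (not_lt.1 fun ht => ?_) ht₀
      obtain ⟨x, hx⟩ := ((tendsto_cdf_atBot ν).eventually (eventually_lt_nhds ht)).exists
      exact hempty.subset (show x ∈ cdf ν ⁻¹' Iic t from hx.le)
    rw [hempty, measure_empty, ht, ENNReal.ofReal_zero]
  · have hbdd : BddAbove (cdf ν ⁻¹' Iic t) := by
      obtain ⟨b, hb⟩ :=
        eventually_atTop.1 ((tendsto_cdf_atTop ν).eventually (eventually_gt_nhds ht₁))
      exact ⟨b, fun x hx => le_of_not_ge fun hbx => (hb x hbx).not_ge hx⟩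
    obtain ⟨s, hs, hpre⟩ := (monotone_cdf ν).exists_preimage_Iic_eq_Iic hc hne hbdd
    rw [hpre, ← ofReal_cdf, hs]

theorem map_cdf_eq_restrict_Icc (hc : Continuous (cdf ν)) :
    ν.map (cdf ν) = volume.restrict (Icc 0 1) := by
  have hm := hc.measurable
  have : IsProbabilityMeasure (ν.map (cdf ν)) := Measure.isProbabilityMeasure_map hm.aemeasurable
  refine Measure.ext_of_Iic _ _ fun t => ?_
  rw [Measure.map_apply hm measurableSet_Iic, Measure.restrict_apply measurableSet_Iic]
  rcases lt_or_ge t 0 with ht₀ | ht₀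
  · have hpre : cdf ν ⁻¹' Iic t = ∅ :=
      eq_empty_of_forall_notMem fun x hx => (ht₀.trans_le (cdf_nonneg ν x)).not_ge hx
    have hint : Iic t ∩ Icc (0:ℝ) 1 = ∅ :=
      eq_empty_of_forall_notMem fun x hx => (ht₀.trans_le hx.2.1).not_ge hx.1
    rw [hpre, hint, measure_empty, measure_empty]
  rcases lt_or_ge t 1 with ht₁ | ht₁
  · have hint : Iic t ∩ Icc (0:ℝ) 1 = Icc 0 t := by
      ext x
      simp only [mem_inter_iff, mem_Iic, mem_Icc]
      constructor
      · rintro ⟨hxt, hx0, -⟩; exact ⟨hx0, hxt⟩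
      · rintro ⟨hx0, hxt⟩; exact ⟨hxt, hx0, by linarith⟩
    rw [hint, Real.volume_Icc, sub_zero, measure_cdf_preimage_Iic hc ht₀ ht₁]
  · have hpre : cdf ν ⁻¹' Iic t = univ :=
      eq_univ_of_forall fun x => (cdf_le_one ν x).trans ht₁
    have hint : Iic t ∩ Icc (0:ℝ) 1 = Icc 0 1 :=
      inter_eq_right.2 fun x hx => hx.2.trans ht₁
    rw [hpre, hint, measure_univ, Real.volume_Icc, sub_zero, ENNReal.ofReal_one]

theorem integral_cdf_of_continuous (hc : Continuous (cdf ν)) : ∫ x, cdf ν x ∂ν = 1 / 2 := by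
  rw [← integral_map (f := fun u => u) hc.measurable.aemeasurable aestronglyMeasurable_id,
    map_cdf_eq_restrict_Icc hc, integral_Icc_eq_integral_Ioc,
    ← intervalIntegral.integral_of_le zero_le_one, integral_id]
  norm_num

theorem integral_comp_cdf_prod {ν' : Measure ℝ} [IsProbabilityMeasure ν'] {φ : ℝ → ℝ → ℝ}
    (hφ : ContinuousOn (uncurry φ) (Icc 0 1 ×ˢ Icc 0 1))
    (hc : Continuous (cdf ν)) (hc' : Continuous (cdf ν')) :
    ∫ p, φ (cdf ν p.1) (cdf ν' p.2) ∂(ν.prod ν') = ∫ u in (0:ℝ)..1, ∫ v in (0:ℝ)..1, φ u v := by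
  have hmap : (ν.prod ν').map (Prod.map (cdf ν) (cdf ν'))
      = volume.restrict (Icc 0 1 ×ˢ Icc 0 1) := by
    rw [← Measure.map_prod_map _ _ hc.measurable hc'.measurable, map_cdf_eq_restrict_Icc hc,
      map_cdf_eq_restrict_Icc hc', Measure.prod_restrict, ← Measure.volume_eq_prod]
  have hint : IntegrableOn (uncurry φ) (Icc 0 1 ×ˢ Icc 0 1) :=
    hφ.integrableOn_compact (isCompact_Icc.prod isCompact_Icc)
  calc ∫ p, φ (cdf ν p.1) (cdf ν' p.2) ∂(ν.prod ν')
      = ∫ q in Icc 0 1 ×ˢ Icc 0 1, uncurry φ q := by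
        rw [← hmap, integral_map (hc.measurable.prodMap hc'.measurable).aemeasurable
          (hmap ▸ hint.aestronglyMeasurable)]
        rfl
    _ = ∫ u in Icc 0 1, ∫ v in Icc 0 1, φ u v := by
        rw [Measure.volume_eq_prod] at hint ⊢
        exact setIntegral_prod _ hint
    _ = ∫ u in (0:ℝ)..1, ∫ v in (0:ℝ)..1, φ u v := by
        simp only [integral_Icc_eq_integral_Ioc, intervalIntegral.integral_of_le zero_le_one]

end CDF

section Events

variable {Ω : Type*} [MeasurableSpace Ω] {μ : Measure Ω} [IsProbabilityMeasure μ]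

theorem measureReal_mul_pos_sub_measureReal_mul_neg {a b : Ω → ℝ} (ha : Measurable a)
    (hb : Measurable b) (ha₀ : μ {ω | a ω = 0} = 0) (hb₀ : μ {ω | b ω = 0} = 0) :
    μ.real {ω | 0 < a ω * b ω} - μ.real {ω | a ω * b ω < 0}
      = 1 - 2 * μ.real {ω | a ω ≤ 0} - 2 * μ.real {ω | b ω ≤ 0}
        + 4 * μ.real {ω | a ω ≤ 0 ∧ b ω ≤ 0} := by
  set A := {ω | a ω ≤ 0}
  set B := {ω | b ω ≤ 0}
  have hA : MeasurableSet A := measurableSet_le ha measurable_const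
  have hB : MeasurableSet B := measurableSet_le hb measurable_const
  have ha' : ∀ᵐ ω ∂μ, a ω ≠ 0 := ae_iff.2 (by simpa using ha₀)
  have hb' : ∀ᵐ ω ∂μ, b ω ≠ 0 := ae_iff.2 (by simpa using hb₀)
  have hpos : {ω | 0 < a ω * b ω} =ᵐ[μ] (Aᶜ ∩ Bᶜ ∪ A ∩ B : Set Ω) := by
    filter_upwards [ha', hb'] with ω haω hbω
    refine propext ?_
    change 0 < a ω * b ω ↔ (¬a ω ≤ 0 ∧ ¬b ω ≤ 0) ∨ (a ω ≤ 0 ∧ b ω ≤ 0)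
    rw [mul_pos_iff, not_le, not_le, haω.le_iff_lt, hbω.le_iff_lt]
  have hneg : {ω | a ω * b ω < 0} =ᵐ[μ] (A \ B ∪ B \ A : Set Ω) := by
    filter_upwards [ha', hb'] with ω haω hbω
    refine propext ?_
    change a ω * b ω < 0 ↔ (a ω ≤ 0 ∧ ¬b ω ≤ 0) ∨ (b ω ≤ 0 ∧ ¬a ω ≤ 0)
    rw [mul_neg_iff, not_le, not_le, haω.le_iff_lt, hbω.le_iff_lt]
    tauto
  have hAB : {ω | a ω ≤ 0 ∧ b ω ≤ 0} = A ∩ B := rfl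
  have hcompl : μ.real (Aᶜ ∩ Bᶜ) = 1 - μ.real (A ∪ B) := by
    rw [← compl_union, probReal_compl_eq_one_sub (hA.union hB)]
  have hunion := measureReal_union_add_inter (μ := μ) (s := A) hB
  have hAdiff := measureReal_inter_add_sdiff (μ := μ) (s := A) hB
  have hBdiff := measureReal_inter_add_sdiff (μ := μ) (s := B) hA
  rw [inter_comm] at hBdiff
  rw [measureReal_congr hpos, measureReal_congr hneg, hAB,
    measureReal_union (disjoint_compl_left.mono inter_subset_left inter_subset_left) (hA.inter hB),
    measureReal_union disjoint_sdiff_sdiff (hB.diff hA), hcompl]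
  linarith

end Events

section Independence

variable {Ω α β : Type*} [MeasurableSpace Ω] [MeasurableSpace α] [MeasurableSpace β]
  {μ : Measure Ω} [IsProbabilityMeasure μ]

theorem ProbabilityTheory.IndepFun.measureReal_preimage_eq_integral {V : Ω → α} {W : Ω → β}
    (h : IndepFun V W μ) (hV : Measurable V) (hW : Measurable W) {S : Set (α × β)}
    (hS : MeasurableSet S) :
    μ.real {ω | (V ω, W ω) ∈ S} = ∫ w, (μ.map V).real ((fun v => (v, w)) ⁻¹' S) ∂(μ.map W) := by
  have := Measure.isProbabilityMeasure_map (μ := μ) hV.aemeasurable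
  have := Measure.isProbabilityMeasure_map (μ := μ) hW.aemeasurable
  change μ.real ((fun ω => (V ω, W ω)) ⁻¹' S) = _
  rw [← map_measureReal_apply (hV.prodMk hW) hS,
    (indepFun_iff_map_prod_eq_prod_map_map hV.aemeasurable hW.aemeasurable).1 h, measureReal_def,
    Measure.prod_apply_symm hS, ← integral_toReal (measurable_measure_prodMk_right hS).aemeasurable
      (ae_of_all _ fun _ => measure_lt_top _ _)]
  rfl

theorem ProbabilityTheory.IndepFun.measureReal_le_eq_integral [TopologicalSpace α]
    [PartialOrder α] [OrderClosedTopology α] [SecondCountableTopology α] [OpensMeasurableSpace α]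
    {V W : Ω → α} (h : IndepFun V W μ) (hV : Measurable V) (hW : Measurable W) :
    μ.real {ω | V ω ≤ W ω} = ∫ w, (μ.map V).real (Iic w) ∂(μ.map W) :=
  h.measureReal_preimage_eq_integral hV hW measurableSet_le'

variable {X X' : Ω → ℝ}

theorem ProbabilityTheory.IndepFun.measure_eq_eq_zero (h : IndepFun X X' μ) (hX : Measurable X)
    (hX' : Measurable X') [NullSingletonClass (μ.map X)] : μ {ω | X ω = X' ω} = 0 := by
  have hslice (w : ℝ) : (μ.map X).real ((fun v => (v, w)) ⁻¹' {p : ℝ × ℝ | p.1 = p.2}) = 0 := by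
    change (μ.map X).real {w} = 0
    rw [measureReal_def, measure_singleton, ENNReal.toReal_zero]
  rw [← measureReal_eq_zero_iff]
  change μ.real {ω | (X ω, X' ω) ∈ {p : ℝ × ℝ | p.1 = p.2}} = 0
  rw [h.measureReal_preimage_eq_integral hX hX'
    (measurableSet_eq_fun measurable_fst measurable_snd)]
  simp only [hslice, integral_zero]

theorem ProbabilityTheory.IndepFun.measureReal_le_eq_half (h : IndepFun X X' μ)
    (hX : Measurable X) (hX' : Measurable X') (hlaw : μ.map X' = μ.map X)
    (hc : Continuous (cdf (μ.map X))) : μ.real {ω | X ω ≤ X' ω} = 1 / 2 := by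
  have := Measure.isProbabilityMeasure_map (μ := μ) hX.aemeasurable
  rw [h.measureReal_le_eq_integral hX hX', hlaw, ← integral_cdf_of_continuous hc]
  exact integral_congr_ae (ae_of_all _ fun w => (cdf_eq_real _ w).symm)

theorem ProbabilityTheory.IndepFun.measureReal_le_and_le_eq_integral {Y Y' : Ω → ℝ}
    (h : IndepFun (fun ω => (X ω, Y ω)) (fun ω => (X' ω, Y' ω)) μ) (h' : IndepFun X' Y' μ)
    (hX : Measurable X) (hY : Measurable Y) (hX' : Measurable X') (hY' : Measurable Y')
    (hlawX : μ.map X' = μ.map X) (hlawY : μ.map Y' = μ.map Y)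
    (hcX : Continuous (cdf (μ.map X))) (hcY : Continuous (cdf (μ.map Y)))
    {C : ℝ → ℝ → ℝ} (hC : ContinuousOn (uncurry C) (Icc 0 1 ×ˢ Icc 0 1))
    (hXY : ∀ x y, μ.real {ω | X ω ≤ x ∧ Y ω ≤ y} = C (cdf (μ.map X) x) (cdf (μ.map Y) y)) :
    μ.real {ω | X ω ≤ X' ω ∧ Y ω ≤ Y' ω} = ∫ u in (0:ℝ)..1, ∫ v in (0:ℝ)..1, C u v := by
  have := Measure.isProbabilityMeasure_map (μ := μ) hX.aemeasurable
  have := Measure.isProbabilityMeasure_map (μ := μ) hY.aemeasurable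
  have hlaw' : μ.map (fun ω => (X' ω, Y' ω)) = (μ.map X).prod (μ.map Y) := by
    rw [(indepFun_iff_map_prod_eq_prod_map_map hX'.aemeasurable hY'.aemeasurable).1 h', hlawX,
      hlawY]
  rw [← integral_comp_cdf_prod hC hcX hcY, ← hlaw']
  refine (h.measureReal_le_eq_integral (hX.prodMk hY) (hX'.prodMk hY')).trans
    (integral_congr_ae (ae_of_all _ fun w => ?_))
  dsimp only
  rw [map_measureReal_apply (hX.prodMk hY) measurableSet_Iic, ← hXY]
  rfl

end Independence

/-- Spearman's rho of three i.i.d. pairs `(Xᵢ, Yᵢ)` with continuous margins and copula `C`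
equals `12 ∫₀¹∫₀¹ C(u,v) du dv − 3`. -/
theorem spearman_rho_copula_formula
    {Ω : Type*} [MeasurableSpace Ω] (μ : Measure Ω) [IsProbabilityMeasure μ]
    (X Y : Fin 3 → Ω → ℝ) (hX : ∀ i, Measurable (X i)) (hY : ∀ i, Measurable (Y i))
    (hindep : iIndepFun
      (fun i ω => (X i ω, Y i ω)) μ)
    (hident : ∀ i : Fin 3, μ.map (fun ω => (X i ω, Y i ω))
      = μ.map (fun ω => (X 0 ω, Y 0 ω)))
    (F G : ℝ → ℝ) (H : ℝ → ℝ → ℝ)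
    (hF : ∀ x, F x = (μ {ω | X 0 ω ≤ x}).toReal)
    (hG : ∀ y, G y = (μ {ω | Y 0 ω ≤ y}).toReal)
    (hH : ∀ x y, H x y = (μ {ω | X 0 ω ≤ x ∧ Y 0 ω ≤ y}).toReal)
    (hFcont : Continuous F) (hGcont : Continuous G)
    (C : ℝ → ℝ → ℝ) (hC : IsCopula C)
    (hHC : ∀ x y, H x y = C (F x) (G y)) :
    3 * ((μ {ω | 0 < (X 0 ω - X 1 ω) * (Y 0 ω - Y 2 ω)}).toReal
        - (μ {ω | (X 0 ω - X 1 ω) * (Y 0 ω - Y 2 ω) < 0}).toReal)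
      = 12 * (∫ u in (0:ℝ)..1, ∫ v in (0:ℝ)..1, C u v) - 3 := by
  have hZ (i : Fin 3) : Measurable fun ω => (X i ω, Y i ω) := (hX i).prodMk (hY i)
  have hident' (i : Fin 3) : IdentDistrib (fun ω => (X i ω, Y i ω)) (fun ω => (X 0 ω, Y 0 ω)) μ μ :=
    ⟨(hZ i).aemeasurable, (hZ 0).aemeasurable, hident i⟩
  have hlawX (i : Fin 3) : μ.map (X i) = μ.map (X 0) := ((hident' i).comp measurable_fst).map_eq
  have hlawY (i : Fin 3) : μ.map (Y i) = μ.map (Y 0) := ((hident' i).comp measurable_snd).map_eq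
  have := Measure.isProbabilityMeasure_map (μ := μ) (hX 0).aemeasurable
  have := Measure.isProbabilityMeasure_map (μ := μ) (hY 0).aemeasurable
  obtain rfl : F = cdf (μ.map (X 0)) := funext fun x => by
    rw [hF, cdf_eq_real, map_measureReal_apply (hX 0) measurableSet_Iic]; rfl
  obtain rfl : G = cdf (μ.map (Y 0)) := funext fun y => by
    rw [hG, cdf_eq_real, map_measureReal_apply (hY 0) measurableSet_Iic]; rfl
  have hX01 : IndepFun (X 0) (X 1) μ :=
    (hindep.indepFun (by decide : (0 : Fin 3) ≠ 1)).comp measurable_fst measurable_fst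
  have hY02 : IndepFun (Y 0) (Y 2) μ :=
    (hindep.indepFun (by decide : (0 : Fin 3) ≠ 2)).comp measurable_snd measurable_snd
  have hquad := IndepFun.measureReal_le_and_le_eq_integral
    ((hindep.indepFun_prodMk hZ 1 2 0 (by decide) (by decide)).symm.comp measurable_id
      (measurable_fst.fst.prodMk measurable_snd.snd))
    ((hindep.indepFun (by decide : (1 : Fin 3) ≠ 2)).comp measurable_fst measurable_snd)
    (hX 0) (hY 0) (hX 1) (hY 2) (hlawX 1) (hlawY 2) hFcont hGcont hC.continuousOn
    fun x y => by rw [measureReal_def, ← hH, hHC]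
  have := nullSingletonClass_of_continuous_cdf hFcont
  have := nullSingletonClass_of_continuous_cdf hGcont
  rw [← measureReal_def, ← measureReal_def, measureReal_mul_pos_sub_measureReal_mul_neg
    (a := fun ω => X 0 ω - X 1 ω) (b := fun ω => Y 0 ω - Y 2 ω)
    ((hX 0).sub (hX 1)) ((hY 0).sub (hY 2))
    (by simpa only [sub_eq_zero] using hX01.measure_eq_eq_zero (hX 0) (hX 1))
    (by simpa only [sub_eq_zero] using hY02.measure_eq_eq_zero (hY 0) (hY 2))]
  simp only [sub_nonpos]
  rw [hX01.measureReal_le_eq_half (hX 0) (hX 1) (hlawX 1) hFcont,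
    hY02.measureReal_le_eq_half (hY 0) (hY 2) (hlawY 2) hGcont, hquad]
  ring
end

section
/- Let c be a copula density on [0,1]². Then the first Blest measure ν₁ = 2 − 12 ∫₀¹∫₀¹ (1−u)² v c(u,v) du dv satisfies −1 ≤ ν₁ ≤ 1. -/
open MeasureTheory Set

/-- The unit square `[0,1]² ⊆ ℝ²`. -/
def unitSquare : Set (ℝ × ℝ) := Icc (0:ℝ) 1 ×ˢ Icc (0:ℝ) 1

/-- A copula density: a nonnegative measurable function on `[0,1]²` integrating to `1`
whose two marginal densities are both the uniform density on `[0,1]`. -/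
def IsCopulaDensity (c : ℝ → ℝ → ℝ) : Prop :=
  Measurable (Function.uncurry c) ∧
  (∀ u ∈ Icc (0:ℝ) 1, ∀ v ∈ Icc (0:ℝ) 1, 0 ≤ c u v) ∧
  (∫ p in unitSquare, c p.1 p.2 = 1) ∧
  (∀ᵐ u ∂(volume.restrict (Icc (0:ℝ) 1)), ∫ v in Icc (0:ℝ) 1, c u v = 1) ∧
  (∀ᵐ v ∂(volume.restrict (Icc (0:ℝ) 1)), ∫ u in Icc (0:ℝ) 1, c u v = 1)

lemma unitSquare_meas : MeasurableSet unitSquare :=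
  measurableSet_Icc.prod measurableSet_Icc

lemma restrict_unitSquare :
    (volume : Measure (ℝ × ℝ)).restrict unitSquare
      = ((volume : Measure ℝ).restrict (Icc 0 1)).prod
          ((volume : Measure ℝ).restrict (Icc 0 1)) := by
  rw [unitSquare, Measure.prod_restrict, ← Measure.volume_eq_prod]

section aux

variable {c : ℝ → ℝ → ℝ} (hc : IsCopulaDensity c)

lemma c_integrable (hc : IsCopulaDensity c) :
    Integrable (fun p : ℝ × ℝ => c p.1 p.2) (volume.restrict unitSquare) := by
  by_contra h
  have := hc.2.2.1
  rw [integral_undef h] at this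
  norm_num at this

lemma c_nonneg_ae (hc : IsCopulaDensity c) :
    ∀ᵐ p ∂(volume.restrict unitSquare), 0 ≤ c (p : ℝ × ℝ).1 p.2 := by
  filter_upwards [ae_restrict_mem unitSquare_meas] with p hp
  exact hc.2.1 p.1 hp.1 p.2 hp.2

lemma bdd_mul_c_integrable (hc : IsCopulaDensity c) (φ : ℝ × ℝ → ℝ)
    (hφm : Measurable φ) (M : ℝ) (hM : ∀ p ∈ unitSquare, |φ p| ≤ M) :
    Integrable (fun p : ℝ × ℝ => φ p * c p.1 p.2) (volume.restrict unitSquare) := by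
  have hMc : Integrable (fun p : ℝ × ℝ => M * c p.1 p.2) (volume.restrict unitSquare) :=
    (c_integrable hc).const_mul M
  refine hMc.mono ((hφm.mul hc.1).aestronglyMeasurable) ?_
  filter_upwards [ae_restrict_mem unitSquare_meas] with p hp
  have h1 : 0 ≤ c p.1 p.2 := hc.2.1 p.1 hp.1 p.2 hp.2
  have h2 : |φ p| ≤ M := hM p hp
  have h3 : 0 ≤ M := le_trans (abs_nonneg _) h2
  simp only [Real.norm_eq_abs, abs_mul]
  rw [abs_of_nonneg h1, abs_of_nonneg h3]
  exact mul_le_mul_of_nonneg_right h2 h1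

/-- First-marginal computation: `∫∫ φ(u) c(u,v) = ∫ φ`. -/
lemma marg_fst (hc : IsCopulaDensity c) (φ : ℝ → ℝ) (hφm : Measurable φ)
    (M : ℝ) (hM : ∀ u ∈ Icc (0:ℝ) 1, |φ u| ≤ M) :
    ∫ p in unitSquare, φ (p : ℝ × ℝ).1 * c p.1 p.2 = ∫ u in Icc (0:ℝ) 1, φ u := by
  have hint : Integrable (fun p : ℝ × ℝ => φ p.1 * c p.1 p.2) (volume.restrict unitSquare) := by
    refine bdd_mul_c_integrable hc _ (hφm.comp measurable_fst) M ?_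
    intro p hp; exact hM p.1 hp.1
  rw [restrict_unitSquare] at hint ⊢
  rw [MeasureTheory.integral_prod _ hint]
  have : ∀ u : ℝ, (∫ v in Icc (0:ℝ) 1, φ u * c u v) = φ u * ∫ v in Icc (0:ℝ) 1, c u v := by
    intro u; exact integral_const_mul _ _
  simp_rw [this]
  refine integral_congr_ae ?_
  filter_upwards [hc.2.2.2.1] with u hu
  rw [hu, mul_one]

/-- Second-marginal computation: `∫∫ ψ(v) c(u,v) = ∫ ψ`. -/
lemma marg_snd (hc : IsCopulaDensity c) (ψ : ℝ → ℝ) (hψm : Measurable ψ)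
    (M : ℝ) (hM : ∀ v ∈ Icc (0:ℝ) 1, |ψ v| ≤ M) :
    ∫ p in unitSquare, ψ (p : ℝ × ℝ).2 * c p.1 p.2 = ∫ v in Icc (0:ℝ) 1, ψ v := by
  have hint : Integrable (fun p : ℝ × ℝ => ψ p.2 * c p.1 p.2) (volume.restrict unitSquare) := by
    refine bdd_mul_c_integrable hc _ (hψm.comp measurable_snd) M ?_
    intro p hp; exact hM p.2 hp.2
  rw [restrict_unitSquare] at hint ⊢
  rw [MeasureTheory.integral_prod_symm _ hint]
  have : ∀ v : ℝ, (∫ u in Icc (0:ℝ) 1, ψ v * c u v) = ψ v * ∫ u in Icc (0:ℝ) 1, c u v := by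
    intro v; exact integral_const_mul _ _
  simp_rw [this]
  refine integral_congr_ae ?_
  filter_upwards [hc.2.2.2.2] with v hv
  rw [hv, mul_one]

end aux

lemma icc_to_interval (f : ℝ → ℝ) :
    ∫ u in Icc (0:ℝ) 1, f u = ∫ u in (0:ℝ)..1, f u := by
  rw [integral_Icc_eq_integral_Ioc, ← intervalIntegral.integral_of_le (by norm_num : (0:ℝ) ≤ 1)]

/-- For a copula density `c`, the first Blest measure
`ν₁ = 2 − 12 ∫₀¹∫₀¹ (1−u)² v c(u,v) du dv` satisfies `−1 ≤ ν₁ ≤ 1`. -/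
theorem blest_I_bounds (c : ℝ → ℝ → ℝ) (hc : IsCopulaDensity c) :
    -1 ≤ 2 - 12 * (∫ p in unitSquare, (1 - p.1) ^ 2 * p.2 * c p.1 p.2) ∧
    2 - 12 * (∫ p in unitSquare, (1 - p.1) ^ 2 * p.2 * c p.1 p.2) ≤ 1 := by
  set I := ∫ p in unitSquare, (1 - p.1) ^ 2 * p.2 * c p.1 p.2 with hI
  -- integrability of the main integrand
  have hfint : Integrable (fun p : ℝ × ℝ => (1 - p.1) ^ 2 * p.2 * c p.1 p.2)
      (volume.restrict unitSquare) := by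
    refine bdd_mul_c_integrable hc _ (by fun_prop) 1 ?_
    rintro ⟨u, v⟩ ⟨hu, hv⟩; simp only [mem_Icc] at hu hv; dsimp only
    obtain ⟨hu0, hu1⟩ := hu; obtain ⟨hv0, hv1⟩ := hv
    have h1 : 0 ≤ (1 - u) ^ 2 := sq_nonneg _
    have h2 : (1 - u) ^ 2 ≤ 1 := pow_le_one₀ (by linarith) (by linarith)
    rw [abs_of_nonneg (by nlinarith)]
    nlinarith
  -- upper bound on I : (1-u)²v ≤ (2/3)(1-u)³ + v³/3
  have hub : I ≤ 1 / 4 := by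
    have ha : ∫ p in unitSquare, (2/3 * (1 - (p : ℝ × ℝ).1) ^ 3) * c p.1 p.2
        = ∫ u in Icc (0:ℝ) 1, 2/3 * (1 - u) ^ 3 := by
      refine marg_fst hc (fun u => 2/3 * (1 - u) ^ 3) (by fun_prop) 1 ?_
      intro u hu; simp only [mem_Icc] at hu
      have h1 : 0 ≤ (1 - u) ^ 3 := pow_nonneg (by linarith) 3
      have h2 : (1 - u) ^ 3 ≤ 1 := pow_le_one₀ (by linarith) (by linarith)
      rw [abs_of_nonneg (by linarith)]; linarith
    have hb : ∫ p in unitSquare, ((p : ℝ × ℝ).2 ^ 3 / 3) * c p.1 p.2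
        = ∫ v in Icc (0:ℝ) 1, v ^ 3 / 3 := by
      refine marg_snd hc (fun v => v ^ 3 / 3) (by fun_prop) 1 ?_
      intro v hv; simp only [mem_Icc] at hv
      have h1 : 0 ≤ v ^ 3 := pow_nonneg (by linarith) 3
      have h2 : v ^ 3 ≤ 1 := pow_le_one₀ (by linarith) (by linarith)
      rw [abs_of_nonneg (by linarith)]; linarith
    have haint : Integrable (fun p : ℝ × ℝ => (2/3 * (1 - p.1) ^ 3) * c p.1 p.2)
        (volume.restrict unitSquare) := by
      refine bdd_mul_c_integrable hc _ (by fun_prop) 1 ?_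
      rintro ⟨u, v⟩ ⟨hu, hv⟩; simp only [mem_Icc] at hu hv; dsimp only
      obtain ⟨hu0, hu1⟩ := hu
      have h1 : 0 ≤ (1 - u) ^ 3 := pow_nonneg (by linarith) 3
      have h2 : (1 - u) ^ 3 ≤ 1 := pow_le_one₀ (by linarith) (by linarith)
      rw [abs_of_nonneg (by linarith)]; linarith
    have hbint : Integrable (fun p : ℝ × ℝ => ((p : ℝ × ℝ).2 ^ 3 / 3) * c p.1 p.2)
        (volume.restrict unitSquare) := by
      refine bdd_mul_c_integrable hc _ (by fun_prop) 1 ?_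
      rintro ⟨u, v⟩ ⟨hu, hv⟩; simp only [mem_Icc] at hu hv; dsimp only
      obtain ⟨hv0, hv1⟩ := hv
      have h1 : 0 ≤ v ^ 3 := pow_nonneg (by linarith) 3
      have h2 : v ^ 3 ≤ 1 := pow_le_one₀ (by linarith) (by linarith)
      rw [abs_of_nonneg (by linarith)]; linarith
    have hmono : I ≤ ∫ p in unitSquare,
        ((2/3 * (1 - (p : ℝ × ℝ).1) ^ 3) * c p.1 p.2 + (p.2 ^ 3 / 3) * c p.1 p.2) := by
      refine integral_mono_ae hfint (haint.add hbint) ?_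
      filter_upwards [ae_restrict_mem unitSquare_meas] with p hp
      have h1 : 0 ≤ c p.1 p.2 := hc.2.1 p.1 hp.1 p.2 hp.2
      have hu := hp.1; have hv := hp.2
      simp only [mem_Icc] at hu hv
      have key : (1 - p.1) ^ 2 * p.2 ≤ 2/3 * (1 - p.1) ^ 3 + p.2 ^ 3 / 3 := by
        nlinarith [sq_nonneg ((1 - p.1) - p.2), sq_nonneg (1 - p.1), sq_nonneg p.2,
          mul_nonneg (sq_nonneg ((1 - p.1) - p.2)) (by linarith : (0:ℝ) ≤ 2 * (1 - p.1) + p.2)]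
      nlinarith [key, h1]
    rw [integral_add haint hbint, ha, hb, icc_to_interval, icc_to_interval] at hmono
    have e1 : ∫ u in (0:ℝ)..1, 2/3 * (1 - u) ^ 3 = 1/6 := by
      have := intervalIntegral.integral_comp_sub_left (a := 0) (b := 1) (fun x : ℝ => 2/3 * x ^ 3) 1
      simp only [sub_zero, sub_self] at this
      rw [this]
      simp [intervalIntegral.integral_const_mul, integral_pow]
      norm_num
    have e2 : ∫ v in (0:ℝ)..1, v ^ 3 / 3 = 1/12 := by
      simp_rw [div_eq_mul_inv]
      rw [intervalIntegral.integral_mul_const, integral_pow]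
      norm_num
    rw [e1, e2] at hmono; linarith
  -- lower bound on I : (1-u)²v ≥ (-u² + 2/3 u³) + (1 - (1-v)³)/3
  have hlb : 1 / 12 ≤ I := by
    have ha : ∫ p in unitSquare, (-(p : ℝ × ℝ).1 ^ 2 + 2/3 * p.1 ^ 3) * c p.1 p.2
        = ∫ u in Icc (0:ℝ) 1, (-u ^ 2 + 2/3 * u ^ 3) := by
      refine marg_fst hc (fun u => -u ^ 2 + 2/3 * u ^ 3) (by fun_prop) 1 ?_
      intro u hu; simp only [mem_Icc] at hu
      have h1 : 0 ≤ u ^ 3 := pow_nonneg (by linarith) 3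
      have h2 : u ^ 3 ≤ 1 := pow_le_one₀ (by linarith) (by linarith)
      have h3 : 0 ≤ u ^ 2 := sq_nonneg u
      have h4 : u ^ 2 ≤ 1 := pow_le_one₀ (by linarith) (by linarith)
      rw [abs_le]; constructor <;> linarith
    have hb : ∫ p in unitSquare, ((1 - (1 - (p : ℝ × ℝ).2) ^ 3) / 3) * c p.1 p.2
        = ∫ v in Icc (0:ℝ) 1, (1 - (1 - v) ^ 3) / 3 := by
      refine marg_snd hc (fun v => (1 - (1 - v) ^ 3) / 3) (by fun_prop) 1 ?_
      intro v hv; simp only [mem_Icc] at hv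
      have h1 : 0 ≤ (1 - v) ^ 3 := pow_nonneg (by linarith) 3
      have h2 : (1 - v) ^ 3 ≤ 1 := pow_le_one₀ (by linarith) (by linarith)
      rw [abs_le]; constructor <;> linarith
    have haint : Integrable (fun p : ℝ × ℝ => (-p.1 ^ 2 + 2/3 * p.1 ^ 3) * c p.1 p.2)
        (volume.restrict unitSquare) := by
      refine bdd_mul_c_integrable hc _ (by fun_prop) 1 ?_
      rintro ⟨u, v⟩ ⟨hu, hv⟩; simp only [mem_Icc] at hu hv; dsimp only
      obtain ⟨hu0, hu1⟩ := hu
      have h1 : 0 ≤ u ^ 3 := pow_nonneg (by linarith) 3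
      have h2 : u ^ 3 ≤ 1 := pow_le_one₀ (by linarith) (by linarith)
      have h3 : 0 ≤ u ^ 2 := sq_nonneg u
      have h4 : u ^ 2 ≤ 1 := pow_le_one₀ (by linarith) (by linarith)
      rw [abs_le]; constructor <;> linarith
    have hbint : Integrable (fun p : ℝ × ℝ => ((1 - (1 - p.2) ^ 3) / 3) * c p.1 p.2)
        (volume.restrict unitSquare) := by
      refine bdd_mul_c_integrable hc _ (by fun_prop) 1 ?_
      rintro ⟨u, v⟩ ⟨hu, hv⟩; simp only [mem_Icc] at hu hv; dsimp only
      obtain ⟨hv0, hv1⟩ := hv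
      have h1 : 0 ≤ (1 - v) ^ 3 := pow_nonneg (by linarith) 3
      have h2 : (1 - v) ^ 3 ≤ 1 := pow_le_one₀ (by linarith) (by linarith)
      rw [abs_le]; constructor <;> linarith
    have hmono : (∫ p in unitSquare,
        ((-(p : ℝ × ℝ).1 ^ 2 + 2/3 * p.1 ^ 3) * c p.1 p.2
          + ((1 - (1 - p.2) ^ 3) / 3) * c p.1 p.2)) ≤ I := by
      refine integral_mono_ae (haint.add hbint) hfint ?_
      filter_upwards [ae_restrict_mem unitSquare_meas] with p hp
      have h1 : 0 ≤ c p.1 p.2 := hc.2.1 p.1 hp.1 p.2 hp.2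
      have hu := hp.1; have hv := hp.2
      simp only [mem_Icc] at hu hv
      have key : (-p.1 ^ 2 + 2/3 * p.1 ^ 3) + (1 - (1 - p.2) ^ 3) / 3
          ≤ (1 - p.1) ^ 2 * p.2 := by
        nlinarith [mul_nonneg (sq_nonneg (p.2 - p.1)) (by linarith : (0:ℝ) ≤ 3 - 2 * p.1 - p.2)]
      nlinarith [key, h1]
    rw [integral_add haint hbint, ha, hb, icc_to_interval, icc_to_interval] at hmono
    have e1 : ∫ u in (0:ℝ)..1, (-u ^ 2 + 2/3 * u ^ 3) = -1/6 := by
      rw [intervalIntegral.integral_add ((Continuous.intervalIntegrable (by fun_prop) 0 1 : IntervalIntegrable (fun u : ℝ => -u ^ 2) volume 0 1)) (Continuous.intervalIntegrable (by fun_prop) 0 1)]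
      rw [intervalIntegral.integral_neg, intervalIntegral.integral_const_mul,
        integral_pow, integral_pow]
      norm_num
    have e2 : ∫ v in (0:ℝ)..1, (1 - (1 - v) ^ 3) / 3 = 1/4 := by
      simp_rw [div_eq_mul_inv]
      rw [intervalIntegral.integral_mul_const,
        intervalIntegral.integral_sub (Continuous.intervalIntegrable continuous_const 0 1) (Continuous.intervalIntegrable (by fun_prop) 0 1)]
      have := intervalIntegral.integral_comp_sub_left (a := 0) (b := 1) (fun x : ℝ => x ^ 3) 1
      simp only [sub_zero, sub_self] at this
      rw [this, integral_pow]
      norm_num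
    rw [e1, e2] at hmono; linarith
  constructor <;> linarith
end

section
/- Let c be a copula density on [0,1]². Then the second Blest measure ν₂ = 2 − 12 ∫₀¹∫₀¹ u (1−v)² c(u,v) du dv satisfies −1 ≤ ν₂ ≤ 1. -/
open MeasureTheory Set

namespace BlestAux

lemma measurableSet_unitSquare : MeasurableSet unitSquare :=
  measurableSet_Icc.prod measurableSet_Icc

lemma restrict_square :
    (volume : Measure (ℝ × ℝ)).restrict unitSquare
      = (volume.restrict (Icc (0:ℝ) 1)).prod (volume.restrict (Icc (0:ℝ) 1)) := by
  rw [Measure.prod_restrict, ← Measure.volume_eq_prod]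
  rfl

lemma c_integrable {c : ℝ → ℝ → ℝ} (hc : IsCopulaDensity c) :
    Integrable (fun p : ℝ × ℝ => c p.1 p.2) (volume.restrict unitSquare) := by
  obtain ⟨hm, hnn, _, hmu, _⟩ := hc
  rw [restrict_square]
  have hsm : AEStronglyMeasurable (fun p : ℝ × ℝ => c p.1 p.2)
      ((volume.restrict (Icc (0:ℝ) 1)).prod (volume.restrict (Icc (0:ℝ) 1))) :=
    (hm.comp measurable_id).aestronglyMeasurable
  rw [integrable_prod_iff hsm]
  constructor
  · filter_upwards [hmu] with u hu
    by_contra h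
    rw [integral_undef h] at hu
    norm_num at hu
  · have heq : (fun u => ∫ v, ‖c u v‖ ∂(volume.restrict (Icc (0:ℝ) 1)))
        =ᵐ[volume.restrict (Icc (0:ℝ) 1)] fun _ => (1:ℝ) := by
      filter_upwards [hmu, ae_restrict_mem measurableSet_Icc] with u hu hu'
      have : (∫ v, ‖c u v‖ ∂(volume.restrict (Icc (0:ℝ) 1)))
          = ∫ v in Icc (0:ℝ) 1, c u v := by
        apply integral_congr_ae
        filter_upwards [ae_restrict_mem measurableSet_Icc] with v hv
        exact Real.norm_of_nonneg (hnn u hu' v hv)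
      rw [this, hu]
    exact (integrable_const (1:ℝ)).congr heq.symm

lemma mul_c_integrable {c : ℝ → ℝ → ℝ} (hc : IsCopulaDensity c) (φ : ℝ × ℝ → ℝ)
    (hφ : Measurable φ) (K : ℝ) (hK : ∀ p ∈ unitSquare, |φ p| ≤ K) :
    Integrable (fun p : ℝ × ℝ => φ p * c p.1 p.2) (volume.restrict unitSquare) := by
  have hnn := hc.2.1
  have hm := hc.1
  have hint := c_integrable hc
  refine Integrable.mono (hint.const_mul K)
    ((hφ.mul (hm.comp measurable_id)).aestronglyMeasurable) ?_
  filter_upwards [ae_restrict_mem measurableSet_unitSquare] with p hp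
  have hc0 : 0 ≤ c p.1 p.2 := hnn p.1 hp.1 p.2 hp.2
  have hK0 : 0 ≤ K := le_trans (abs_nonneg _) (hK p hp)
  rw [Real.norm_eq_abs, Real.norm_eq_abs, abs_mul, abs_of_nonneg hc0,
    abs_of_nonneg (mul_nonneg hK0 hc0)]
  exact mul_le_mul_of_nonneg_right (hK p hp) hc0

/-- Integrate out the second variable against a function of the first. -/
lemma integral_left {c : ℝ → ℝ → ℝ} (hc : IsCopulaDensity c) (g : ℝ → ℝ) (hg : Measurable g)
    (K : ℝ) (hK : ∀ u ∈ Icc (0:ℝ) 1, |g u| ≤ K) :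
    ∫ p in unitSquare, g p.1 * c p.1 p.2 = ∫ u in Icc (0:ℝ) 1, g u := by
  have hint := mul_c_integrable hc (fun p => g p.1) (hg.comp measurable_fst) K
    (fun p hp => hK p.1 hp.1)
  rw [restrict_square] at hint ⊢
  rw [MeasureTheory.integral_prod _ hint]
  refine integral_congr_ae ?_
  filter_upwards [hc.2.2.2.1] with u hu
  rw [integral_const_mul, hu, mul_one]

/-- Integrate out the first variable against a function of the second. -/
lemma integral_right {c : ℝ → ℝ → ℝ} (hc : IsCopulaDensity c) (g : ℝ → ℝ) (hg : Measurable g)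
    (K : ℝ) (hK : ∀ v ∈ Icc (0:ℝ) 1, |g v| ≤ K) :
    ∫ p in unitSquare, g p.2 * c p.1 p.2 = ∫ v in Icc (0:ℝ) 1, g v := by
  have hint := mul_c_integrable hc (fun p => g p.2) (hg.comp measurable_snd) K
    (fun p hp => hK p.2 hp.2)
  rw [restrict_square] at hint ⊢
  rw [MeasureTheory.integral_prod_symm _ hint]
  refine integral_congr_ae ?_
  filter_upwards [hc.2.2.2.2] with v hv
  rw [integral_const_mul, hv, mul_one]

lemma cube_le_one {x : ℝ} (h1 : 0 ≤ x) (h2 : x ≤ 1) : x ^ 3 ≤ 1 := by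
  nlinarith [mul_nonneg (mul_nonneg h1 h1) (sub_nonneg.2 h2), mul_nonneg h1 (sub_nonneg.2 h2)]

lemma amgm {s w : ℝ} (hs : 0 ≤ s) (hw : 0 ≤ w) : 3 * (s * w ^ 2) ≤ s ^ 3 + 2 * w ^ 3 := by
  nlinarith [mul_nonneg (sq_nonneg (s - w)) hs, mul_nonneg (sq_nonneg (s - w)) hw]

lemma Icc_int₁ : ∫ u in Icc (0:ℝ) 1, u ^ 3 / 3 = 1 / 12 := by
  rw [MeasureTheory.integral_Icc_eq_integral_Ioc, ← intervalIntegral.integral_of_le zero_le_one]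
  simp [intervalIntegral.integral_div]
  norm_num

lemma comp_sub (f : ℝ → ℝ) : ∫ v in Icc (0:ℝ) 1, f (1 - v) = ∫ x in Icc (0:ℝ) 1, f x := by
  rw [MeasureTheory.integral_Icc_eq_integral_Ioc, ← intervalIntegral.integral_of_le zero_le_one,
    intervalIntegral.integral_comp_sub_left f 1,
    MeasureTheory.integral_Icc_eq_integral_Ioc, ← intervalIntegral.integral_of_le zero_le_one]
  norm_num

lemma Icc_int₂ : ∫ v in Icc (0:ℝ) 1, 2 * (1 - v) ^ 3 / 3 = 1 / 6 := by
  have := comp_sub (fun x => 2 * x ^ 3 / 3)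
  rw [this, MeasureTheory.integral_Icc_eq_integral_Ioc,
    ← intervalIntegral.integral_of_le zero_le_one]
  have : ∫ x in (0:ℝ)..1, 2 * x ^ 3 / 3 = ∫ x in (0:ℝ)..1, (2/3) * x ^ 3 := by
    congr 1; ext x; ring
  rw [this, intervalIntegral.integral_const_mul]
  norm_num

lemma Icc_int₃ : ∫ u in Icc (0:ℝ) 1, -(1 - u) ^ 3 / 3 = -(1 / 12) := by
  have := comp_sub (fun x => -x ^ 3 / 3)
  rw [show (fun u : ℝ => -(1-u)^3/3) = (fun u : ℝ => -(1-u)^3/3) from rfl]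
  calc ∫ u in Icc (0:ℝ) 1, -(1 - u) ^ 3 / 3 = ∫ x in Icc (0:ℝ) 1, -x ^ 3 / 3 := this
    _ = -(1/12) := by
        rw [MeasureTheory.integral_Icc_eq_integral_Ioc,
          ← intervalIntegral.integral_of_le zero_le_one]
        have : ∫ x in (0:ℝ)..1, -x ^ 3 / 3 = ∫ x in (0:ℝ)..1, (-1/3) * x ^ 3 := by
          congr 1; ext x; ring
        rw [this, intervalIntegral.integral_const_mul]
        norm_num

lemma Icc_int₄ : ∫ v in Icc (0:ℝ) 1, ((1 - v) ^ 2 - 2 * (1 - v) ^ 3 / 3) = 1 / 6 := by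
  have := comp_sub (fun x => x ^ 2 - 2 * x ^ 3 / 3)
  calc ∫ v in Icc (0:ℝ) 1, ((1 - v) ^ 2 - 2 * (1 - v) ^ 3 / 3)
      = ∫ x in Icc (0:ℝ) 1, (x ^ 2 - 2 * x ^ 3 / 3) := this
    _ = 1/6 := by
        rw [MeasureTheory.integral_Icc_eq_integral_Ioc,
          ← intervalIntegral.integral_of_le zero_le_one]
        have h1 : IntervalIntegrable (fun x : ℝ => x ^ 2) volume 0 1 :=
          (continuous_pow 2).intervalIntegrable 0 1
        have h2 : IntervalIntegrable (fun x : ℝ => 2 * x ^ 3 / 3) volume 0 1 := by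
          apply Continuous.intervalIntegrable; continuity
        rw [intervalIntegral.integral_sub h1 h2]
        have : ∫ x in (0:ℝ)..1, 2 * x ^ 3 / 3 = ∫ x in (0:ℝ)..1, (2/3) * x ^ 3 := by
          congr 1; ext x; ring
        rw [this, intervalIntegral.integral_const_mul]
        norm_num

end BlestAux

open BlestAux in
/-- For a copula density `c`, the second Blest measure
`ν₂ = 2 − 12 ∫₀¹∫₀¹ u (1−v)² c(u,v) du dv` satisfies `−1 ≤ ν₂ ≤ 1`. -/
theorem blest_II_bounds (c : ℝ → ℝ → ℝ) (hc : IsCopulaDensity c) :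
    -1 ≤ 2 - 12 * (∫ p in unitSquare, p.1 * (1 - p.2) ^ 2 * c p.1 p.2) ∧
    2 - 12 * (∫ p in unitSquare, p.1 * (1 - p.2) ^ 2 * c p.1 p.2) ≤ 1 := by
  have hnn := hc.2.1
  have hm1 : Measurable (fun p : ℝ × ℝ => p.1 * (1 - p.2) ^ 2) :=
    measurable_fst.mul ((measurable_const.sub measurable_snd).pow_const 2)
  have hm2 : Measurable (fun p : ℝ × ℝ => p.1 ^ 3 / 3) :=
    (measurable_fst.pow_const 3).div_const 3
  have hm3 : Measurable (fun p : ℝ × ℝ => 2 * (1 - p.2) ^ 3 / 3) :=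
    ((((measurable_const.sub measurable_snd).pow_const 3).const_mul 2).div_const 3)
  have hm4 : Measurable (fun p : ℝ × ℝ => -(1 - p.1) ^ 3 / 3) :=
    (((measurable_const.sub measurable_fst).pow_const 3).neg.div_const 3)
  have hm5 : Measurable (fun p : ℝ × ℝ => (1 - p.2) ^ 2 - 2 * (1 - p.2) ^ 3 / 3) :=
    (((measurable_const.sub measurable_snd).pow_const 2).sub
      ((((measurable_const.sub measurable_snd).pow_const 3).const_mul 2).div_const 3))
  -- integrability facts
  have hintJ := mul_c_integrable hc _ hm1 1 (by
    rintro p ⟨⟨h1, h2⟩, h3, h4⟩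
    rw [abs_mul, abs_of_nonneg h1, abs_of_nonneg (sq_nonneg _)]
    nlinarith [mul_nonneg h3 (sub_nonneg.2 h4)])
  have hintA := mul_c_integrable hc _ hm2 1 (by
    rintro p ⟨⟨h1, h2⟩, h3, h4⟩
    rw [abs_of_nonneg (div_nonneg (pow_nonneg h1 3) (by norm_num))]
    nlinarith [cube_le_one h1 h2])
  have hintB := mul_c_integrable hc _ hm3 1 (by
    rintro p ⟨⟨h1, h2⟩, h3, h4⟩
    rw [abs_of_nonneg (by
      have := pow_nonneg (by linarith : (0:ℝ) ≤ 1 - p.2) 3; linarith :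
        (0:ℝ) ≤ 2 * (1 - p.2) ^ 3 / 3)]
    nlinarith [cube_le_one (by linarith : (0:ℝ) ≤ 1 - p.2) (by linarith : (1:ℝ) - p.2 ≤ 1)])
  have hintA' := mul_c_integrable hc _ hm4 1 (by
    rintro p ⟨⟨h1, h2⟩, h3, h4⟩
    have e1 := cube_le_one (by linarith : (0:ℝ) ≤ 1 - p.1) (by linarith : (1:ℝ) - p.1 ≤ 1)
    have e2 := pow_nonneg (by linarith : (0:ℝ) ≤ 1 - p.1) 3
    rw [abs_le]; constructor <;> nlinarith)
  have hintB' := mul_c_integrable hc _ hm5 1 (by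
    rintro p ⟨⟨h1, h2⟩, h3, h4⟩
    have e1 := cube_le_one (by linarith : (0:ℝ) ≤ 1 - p.2) (by linarith : (1:ℝ) - p.2 ≤ 1)
    have e2 := pow_nonneg (by linarith : (0:ℝ) ≤ 1 - p.2) 3
    have e3 := sq_nonneg (1 - p.2)
    have e4 : (1 - p.2) ^ 2 ≤ 1 := by nlinarith
    rw [abs_le]; constructor <;> nlinarith)
  -- upper bound on J
  have hup : (∫ p in unitSquare, p.1 * (1 - p.2) ^ 2 * c p.1 p.2) ≤ 1 / 4 := by
    have hmono : (∫ p in unitSquare, p.1 * (1 - p.2) ^ 2 * c p.1 p.2)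
        ≤ ∫ p in unitSquare, (p.1 ^ 3 / 3 * c p.1 p.2 + 2 * (1 - p.2) ^ 3 / 3 * c p.1 p.2) := by
      refine setIntegral_mono_on hintJ (hintA.add hintB) measurableSet_unitSquare ?_
      rintro p ⟨⟨h1, h2⟩, h3, h4⟩
      have hc0 : 0 ≤ c p.1 p.2 := hnn p.1 ⟨h1, h2⟩ p.2 ⟨h3, h4⟩
      have := amgm h1 (by linarith : (0:ℝ) ≤ 1 - p.2)
      nlinarith
    rw [integral_add hintA hintB] at hmono
    rw [integral_left hc (fun u => u ^ 3 / 3) ((measurable_id.pow_const 3).div_const 3) 1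
      (by rintro u ⟨h1, h2⟩
          rw [abs_of_nonneg (div_nonneg (pow_nonneg h1 3) (by norm_num))]
          nlinarith [cube_le_one h1 h2]),
      integral_right hc (fun v => 2 * (1 - v) ^ 3 / 3)
      ((((measurable_const.sub measurable_id).pow_const 3).const_mul 2).div_const 3) 1
      (by rintro v ⟨h1, h2⟩
          rw [abs_of_nonneg (by
            have := pow_nonneg (by linarith : (0:ℝ) ≤ 1 - v) 3; linarith :
              (0:ℝ) ≤ 2 * (1 - v) ^ 3 / 3)]
          nlinarith [cube_le_one (by linarith : (0:ℝ) ≤ 1 - v) (by linarith : (1:ℝ) - v ≤ 1)]),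
      Icc_int₁, Icc_int₂] at hmono
    linarith
  -- lower bound on J
  have hlo : (1:ℝ) / 12 ≤ ∫ p in unitSquare, p.1 * (1 - p.2) ^ 2 * c p.1 p.2 := by
    have hmono : (∫ p in unitSquare, (-(1 - p.1) ^ 3 / 3 * c p.1 p.2
          + ((1 - p.2) ^ 2 - 2 * (1 - p.2) ^ 3 / 3) * c p.1 p.2))
        ≤ ∫ p in unitSquare, p.1 * (1 - p.2) ^ 2 * c p.1 p.2 := by
      refine setIntegral_mono_on (hintA'.add hintB') hintJ measurableSet_unitSquare ?_
      rintro p ⟨⟨h1, h2⟩, h3, h4⟩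
      have hc0 : 0 ≤ c p.1 p.2 := hnn p.1 ⟨h1, h2⟩ p.2 ⟨h3, h4⟩
      have := amgm (by linarith : (0:ℝ) ≤ 1 - p.1) (by linarith : (0:ℝ) ≤ 1 - p.2)
      nlinarith
    rw [integral_add hintA' hintB'] at hmono
    rw [integral_left hc (fun u => -(1 - u) ^ 3 / 3)
      (((measurable_const.sub measurable_id).pow_const 3).neg.div_const 3) 1
      (by rintro u ⟨h1, h2⟩
          have e1 := cube_le_one (by linarith : (0:ℝ) ≤ 1 - u) (by linarith : (1:ℝ) - u ≤ 1)
          have e2 := pow_nonneg (by linarith : (0:ℝ) ≤ 1 - u) 3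
          rw [abs_le]; constructor <;> nlinarith),
      integral_right hc (fun v => (1 - v) ^ 2 - 2 * (1 - v) ^ 3 / 3)
      (((measurable_const.sub measurable_id).pow_const 2).sub
        ((((measurable_const.sub measurable_id).pow_const 3).const_mul 2).div_const 3)) 1
      (by rintro v ⟨h1, h2⟩
          have e1 := cube_le_one (by linarith : (0:ℝ) ≤ 1 - v) (by linarith : (1:ℝ) - v ≤ 1)
          have e2 := pow_nonneg (by linarith : (0:ℝ) ≤ 1 - v) 3
          have e4 : (1 - v) ^ 2 ≤ 1 := by nlinarith
          have e5 := sq_nonneg (1 - v)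
          rw [abs_le]; constructor <;> nlinarith),
      Icc_int₃, Icc_int₄] at hmono
    linarith
  constructor <;> linarith
end
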